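/- arXiv:2507.22797 — 8 statements merged into one kernel-verified Lean document; each statement's English description precedes it below -/
import Mathlib

section
/- Let X be a Banach space and let P, L : X → X be continuous linear maps with P idempotent (P ∘ P = P). Assume that I + L is bijective and that T := I + (P − I) ∘ L ∘ (I + L)⁻¹ is bijective. Then I + P ∘ L is bijective, (I + P ∘ L)⁻¹ = (I + L)⁻¹ ∘ T⁻¹, and moreover (I + P ∘ L)⁻¹ ∘ (I − P) = (I + L)⁻¹ ∘ (I − P) ∘ T⁻¹ ∘ (I − P). -/
/-- If `P` is an idempotent continuous linear projection and `L` a continuous linear map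
on a Banach space `X` such that `I + L` is bijective (with continuous inverse `E.symm`)
and `T := I + (P − I) ∘ L ∘ (I + L)⁻¹` is bijective (with continuous inverse `S.symm`),
then `I + P ∘ L` is bijective, `(I + P∘L)⁻¹ = (I+L)⁻¹ ∘ T⁻¹`, and
`(I + P∘L)⁻¹ ∘ (I − P) = (I+L)⁻¹ ∘ (I − P) ∘ T⁻¹ ∘ (I − P)`. -/
theorem stmt_1 {𝕜 X : Type*} [RCLike 𝕜] [NormedAddCommGroup X] [NormedSpace 𝕜 X]
    [CompleteSpace X] (P L : X →L[𝕜] X) (hP : P.comp P = P)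
    (E : X ≃L[𝕜] X) (hE : ∀ x, E x = x + L x)
    (S : X ≃L[𝕜] X) (hS : ∀ x, S x = x + (P (L (E.symm x)) - L (E.symm x))) :
    ∃ U : X ≃L[𝕜] X, (∀ x, U x = x + P (L x)) ∧
      (∀ y, U.symm y = E.symm (S.symm y)) ∧
      (∀ y, U.symm ((1 - P) y) = E.symm ((1 - P) (S.symm ((1 - P) y)))) := by
  refine ⟨E.trans S, ?_, ?_, ?_⟩
  · intro x
    have h1 : (E.trans S) x = S (E x) := rfl
    rw [h1, hS, hE, ← hE, E.symm_apply_apply, hE]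
    abel
  · intro y; rfl
  · intro y
    have hPP : ∀ z, P (P z) = P z := fun z => congrFun (congrArg DFunLike.coe hP) z
    set w := S.symm ((1 - P) y) with hw
    have hSw : S w = (1 - P) y := S.apply_symm_apply _
    rw [hS] at hSw
    have hPw : P w = 0 := by
      have := congrArg P hSw
      simp only [map_add, map_sub, hPP, ContinuousLinearMap.sub_apply,
        ContinuousLinearMap.one_apply] at this
      simpa using this
    have hwe : (1 - P) w = w := by
      simp [ContinuousLinearMap.sub_apply, hPw]
    show E.symm w = E.symm ((1 - P) w)
    rw [hwe]
end

section
/- Let X be a Banach space and let P, L, L_N : X → X be continuous linear maps with P idempotent (P ∘ P = P). Assume that I + P ∘ L_N ∘ P : X → X is bijective. Then for every v ∈ X, setting f := (I + L) v, there exists a unique v_N ∈ X with P v_N = v_N and (I + P ∘ L_N) v_N = P f, and the error identity v − v_N = (I + P ∘ L_N ∘ P)⁻¹ ( (I − P ∘ L)((I − P) v) + P((L_N − L)(P v)) ) holds. -/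
/-- Abstract error identity for fully discrete (Nyström-type) methods: if `P` is an
idempotent continuous linear projection and `L`, `L_N` continuous linear maps on a Banach
space `X` with `I + P ∘ L_N ∘ P` bijective (with continuous inverse `T.symm`), then for
every `v`, with `f := (I + L) v`, there is a unique `v_N` with `P v_N = v_N` and
`(I + P ∘ L_N) v_N = P f`, and
`v − v_N = (I + P∘L_N∘P)⁻¹ ((I − P∘L)((I − P) v) + P((L_N − L)(P v)))`. -/
theorem stmt_2 {𝕜 X : Type*} [RCLike 𝕜] [NormedAddCommGroup X] [NormedSpace 𝕜 X]
    [CompleteSpace X] (P L LN : X →L[𝕜] X) (hP : P.comp P = P)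
    (T : X ≃L[𝕜] X) (hT : ∀ x, T x = x + P (LN (P x))) (v : X) :
    (∃! vN : X, P vN = vN ∧ (1 + P.comp LN) vN = P ((1 + L) v)) ∧
      ∀ vN : X, P vN = vN → (1 + P.comp LN) vN = P ((1 + L) v) →
        v - vN = T.symm ((1 - P.comp L) ((1 - P) v) + P ((LN - L) (P v))) := by
  have hPP : ∀ x, P (P x) = P x := fun x => by
    rw [← ContinuousLinearMap.comp_apply, hP]
  -- simplify the right-hand side expression
  have hRsimp : (1 - P.comp L) ((1 - P) v) + P ((LN - L) (P v))
      = v - P v - P (L v) + P (LN (P v)) := by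
    simp only [ContinuousLinearMap.sub_apply, ContinuousLinearMap.one_apply,
      ContinuousLinearMap.comp_apply, map_sub]
    abel
  set R : X := v - P v - P (L v) + P (LN (P v)) with hRdef
  -- key: any solution w satisfies T (v - w) = R
  have key : ∀ w : X, P w = w → (1 + P.comp LN) w = P ((1 + L) v) → T (v - w) = R := by
    intro w hw hweq
    have hweq' : w + P (LN w) = P v + P (L v) := by
      simpa [ContinuousLinearMap.add_apply, ContinuousLinearMap.one_apply,
        ContinuousLinearMap.comp_apply, map_add] using hweq
    rw [hT, map_sub, hw, map_sub, map_sub]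
    rw [← sub_eq_zero] at hweq' ⊢
    rw [hRdef, show (0 : X) = -(w + P (LN w) - (P v + P (L v))) from by
      rw [hweq', neg_zero]]
    abel
  -- candidate solution
  set e : X := T.symm ((1 - P.comp L) ((1 - P) v) + P ((LN - L) (P v))) with he
  have hTe : e + P (LN (P e)) = R := by
    rw [← hT e, he, T.apply_symm_apply, hRsimp]
  have hPe : P e + P (LN (P e)) = -P (L v) + P (LN (P v)) := by
    have := congrArg P hTe
    simpa [map_add, map_sub, hPP, hRdef] using this
  have hPvN : P (v - e) = v - e := by
    rw [map_sub, ← sub_eq_zero]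
    rw [← sub_eq_zero] at hTe hPe
    rw [show (0 : X) = (e + P (LN (P e)) - R) - (P e + P (LN (P e)) -
      (-P (L v) + P (LN (P v)))) from by rw [hTe, hPe]; abel, hRdef]
    abel
  have hTee : T e = R := by rw [hT]; exact hTe
  have heq : (1 + P.comp LN) (v - e) = P ((1 + L) v) := by
    have h4 : P (LN (P e)) = R - e := by rw [← hTe]; abel
    have h5 : LN (v - e) = LN (P v) - LN (P e) := by
      conv_lhs => rw [← hPvN]
      rw [map_sub, map_sub]
    simp only [ContinuousLinearMap.add_apply, ContinuousLinearMap.one_apply,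
      ContinuousLinearMap.comp_apply, map_add]
    rw [h5, map_sub, h4, hRdef]
    abel
  refine ⟨⟨v - e, ⟨hPvN, heq⟩, ?_⟩, ?_⟩
  · intro w ⟨hw1, hw2⟩
    have h1 := key w hw1 hw2
    have h2 := key (v - e) hPvN heq
    exact sub_right_injective (T.injective (h1.trans h2.symm))
  · intro vN h1 h2
    have h3 := key vN h1 h2
    exact T.injective (h3.trans hTee.symm)
end

section
/- Let X be a Banach space and let P, L, L_N : X → X be continuous linear maps. Assume that I + P ∘ L is bijective and that ‖(I + P ∘ L)⁻¹ ∘ P ∘ L ∘ (P − I)‖ ≤ 1/4 and ‖(I + P ∘ L)⁻¹ ∘ P ∘ (L_N − L) ∘ P‖ ≤ 1/4 in operator norm. Then I + P ∘ L_N ∘ P is bijective and, for every w ∈ X, ‖(I + P ∘ L_N ∘ P)⁻¹ w‖ ≤ 2 ‖(I + P ∘ L)⁻¹ w‖. -/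
/-- Neumann-series invertibility step for the Nyström method: if `I + P ∘ L` is bijective
(with continuous inverse `T.symm`) and the operator norms of
`(I + P∘L)⁻¹ ∘ P ∘ L ∘ (P − I)` and `(I + P∘L)⁻¹ ∘ P ∘ (L_N − L) ∘ P` are each `≤ 1/4`,
then `I + P ∘ L_N ∘ P` is bijective and `‖(I + P∘L_N∘P)⁻¹ w‖ ≤ 2 ‖(I + P∘L)⁻¹ w‖` for
every `w`. -/
theorem stmt_3 {𝕜 X : Type*} [RCLike 𝕜] [NormedAddCommGroup X] [NormedSpace 𝕜 X]
    [CompleteSpace X] (P L LN : X →L[𝕜] X)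
    (T : X ≃L[𝕜] X) (hT : ∀ x, T x = x + P (L x))
    (h1 : ‖(T.symm : X →L[𝕜] X).comp (P.comp (L.comp (P - 1)))‖ ≤ 1 / 4)
    (h2 : ‖(T.symm : X →L[𝕜] X).comp (P.comp ((LN - L).comp P))‖ ≤ 1 / 4) :
    ∃ U : X ≃L[𝕜] X, (∀ x, U x = x + P (LN (P x))) ∧
      ∀ w : X, ‖U.symm w‖ ≤ 2 * ‖T.symm w‖ := by
  set A : X →L[𝕜] X := (T.symm : X →L[𝕜] X).comp (P.comp (L.comp (P - 1))) +
    (T.symm : X →L[𝕜] X).comp (P.comp ((LN - L).comp P)) with hA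
  have hAnorm : ‖A‖ ≤ 1 / 2 := by
    calc ‖A‖ ≤ _ + _ := norm_add_le _ _
    _ ≤ 1 / 4 + 1 / 4 := add_le_add h1 h2
    _ = 1 / 2 := by norm_num
  have hlt : ‖-A‖ < 1 := by rw [norm_neg]; linarith
  set u : (X →L[𝕜] X)ˣ := Units.oneSub (-A) hlt with hu
  have hue : ∀ x, (u : X →L[𝕜] X) x = x + A x := by
    intro x
    simp [hu, Units.val_oneSub, ContinuousLinearMap.sub_apply, sub_neg_eq_add]
  set e : X ≃L[𝕜] X := ContinuousLinearEquiv.ofUnit u with he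
  have hee : ∀ x, e x = x + A x := hue
  refine ⟨e.trans T, ?_, ?_⟩
  · intro x
    have : (e.trans T) x = T (x + A x) := by rw [ContinuousLinearEquiv.trans_apply, hee]
    rw [this]
    have hAx : A x = T.symm (P (L (P x - x))) + T.symm (P ((LN) (P x) - L (P x))) := by
      simp [hA, ContinuousLinearMap.add_apply, ContinuousLinearMap.comp_apply,
        ContinuousLinearMap.sub_apply, ContinuousLinearMap.one_apply]
    rw [hAx, map_add, map_add, ContinuousLinearEquiv.apply_symm_apply,
      ContinuousLinearEquiv.apply_symm_apply, hT]
    rw [map_sub, map_sub, map_sub]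
    abel
  · intro w
    set z := (e.trans T).symm w with hz
    have hw : T (e z) = w := (e.trans T).apply_symm_apply w
    have hez : e z = T.symm w := by
      have := congrArg T.symm hw
      rwa [ContinuousLinearEquiv.symm_apply_apply] at this
    have : z + A z = T.symm w := by rw [← hee]; exact hez
    have hzz : z = T.symm w - A z := by rw [← this]; abel
    have hnorm : ‖z‖ ≤ ‖T.symm w‖ + (1/2) * ‖z‖ := by
      calc ‖z‖ = ‖T.symm w - A z‖ := by rw [← hzz]
      _ ≤ ‖T.symm w‖ + ‖A z‖ := norm_sub_le _ _
      _ ≤ ‖T.symm w‖ + (1/2) * ‖z‖ := by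
            have := (A.le_opNorm z).trans
              (mul_le_mul_of_nonneg_right hAnorm (norm_nonneg z))
            linarith
    linarith
end

section
/- Let t ≥ q ≥ 0 with t > 1/2. There exists a constant C > 0, depending only on t and q, such that for every k > 0, every integer N ≥ 1 with N + 1 ≥ k, and every sequence c : ℤ → ℂ with Σ_t := ∑_{n ∈ ℤ} |c_n|² ⟨n/k⟩^{2t} < ∞, the following hold: for each integer μ with |μ| ≤ N the family (c_{μ + ℓ(2N+1)})_{ℓ ∈ ℤ, ℓ ≠ 0} is absolutely summable, and ∑_{|μ| ≤ N} |∑_{ℓ ≠ 0} c_{μ + ℓ(2N+1)}|² ⟨μ/k⟩^{2q} + ∑_{|n| ≥ N+1} |c_n|² ⟨n/k⟩^{2q} ≤ C (k/N)^{2(t−q)} Σ_t. -/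
/-- The Japanese bracket `⟨x⟩ = (1 + x²)^{1/2}`. -/
noncomputable def jb (x : ℝ) : ℝ := Real.sqrt (1 + x ^ 2)

lemma jb_nonneg (x : ℝ) : 0 ≤ jb x := Real.sqrt_nonneg _

lemma one_le_jb (x : ℝ) : 1 ≤ jb x := by
  have h : (1 : ℝ) = Real.sqrt 1 := by simp
  rw [h, jb]
  exact Real.sqrt_le_sqrt (by nlinarith [sq_nonneg x])

lemma jb_pos (x : ℝ) : 0 < jb x := lt_of_lt_of_le one_pos (one_le_jb x)

lemma abs_le_jb (x : ℝ) : |x| ≤ jb x := by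
  rw [← Real.sqrt_sq_eq_abs, jb]
  exact Real.sqrt_le_sqrt (by linarith)

/-- Cauchy–Schwarz for `tsum` of nonnegative reals. -/
lemma tsum_cs {ι : Type*} {f g : ι → ℝ} (hf : ∀ i, 0 ≤ f i) (hg : ∀ i, 0 ≤ g i)
    (hf2 : Summable fun i => f i ^ 2) (hg2 : Summable fun i => g i ^ 2) :
    Summable (fun i => f i * g i) ∧
      (∑' i, f i * g i) ^ 2 ≤ (∑' i, f i ^ 2) * ∑' i, g i ^ 2 := by
  have hfg : Summable fun i => f i * g i := by
    refine Summable.of_nonneg_of_le (fun i => mul_nonneg (hf i) (hg i)) (fun i => ?_)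
      ((hf2.add hg2).mul_left (1/2))
    have h := sq_nonneg (f i - g i)
    nlinarith
  refine ⟨hfg, ?_⟩
  have hA : 0 ≤ ∑' i, f i ^ 2 := tsum_nonneg fun i => sq_nonneg _
  have hB : 0 ≤ ∑' i, g i ^ 2 := tsum_nonneg fun i => sq_nonneg _
  have hX : (∑' i, f i * g i) ≤ Real.sqrt ((∑' i, f i ^ 2) * ∑' i, g i ^ 2) := by
    refine Summable.tsum_le_of_sum_le hfg fun s => ?_
    have h1 : (∑ i ∈ s, f i * g i) ^ 2 ≤ (∑ i ∈ s, f i ^ 2) * ∑ i ∈ s, g i ^ 2 :=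
      Finset.sum_mul_sq_le_sq_mul_sq s f g
    have h2 : (∑ i ∈ s, f i ^ 2) * ∑ i ∈ s, g i ^ 2 ≤ (∑' i, f i ^ 2) * ∑' i, g i ^ 2 := by
      have e1 := Summable.sum_le_tsum s (fun i _ => sq_nonneg (f i)) hf2
      have e2 := Summable.sum_le_tsum s (fun i _ => sq_nonneg (g i)) hg2
      have e3 : (0:ℝ) ≤ ∑ i ∈ s, g i ^ 2 := Finset.sum_nonneg fun i _ => sq_nonneg _
      exact mul_le_mul e1 e2 e3 hA
    have h0 : 0 ≤ ∑ i ∈ s, f i * g i := Finset.sum_nonneg fun i _ => mul_nonneg (hf i) (hg i)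
    calc ∑ i ∈ s, f i * g i = Real.sqrt ((∑ i ∈ s, f i * g i) ^ 2) := (Real.sqrt_sq h0).symm
      _ ≤ Real.sqrt ((∑' i, f i ^ 2) * ∑' i, g i ^ 2) := Real.sqrt_le_sqrt (h1.trans h2)
  have h0 : 0 ≤ ∑' i, f i * g i := tsum_nonneg fun i => mul_nonneg (hf i) (hg i)
  calc (∑' i, f i * g i) ^ 2 ≤ Real.sqrt ((∑' i, f i ^ 2) * ∑' i, g i ^ 2) ^ 2 :=
        pow_le_pow_left₀ h0 hX 2
    _ = _ := Real.sq_sqrt (mul_nonneg hA hB)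

/-- Semiclassical approximation property of the trigonometric collocation
(interpolation) projection at `2N+1` equispaced points, in Fourier-coefficient form
(Kress–Sloan estimate): for `t ≥ q ≥ 0` with `t > 1/2` there is `C > 0` such that for all
`k > 0`, all `N ≥ 1` with `N + 1 ≥ k`, and all `c : ℤ → ℂ` with
`Σ_t := ∑_n |c_n|² ⟨n/k⟩^{2t} < ∞`, the aliasing families `(c_{μ+ℓ(2N+1)})_{ℓ ≠ 0}`
(`|μ| ≤ N`) are absolutely summable, and
`∑_{|μ|≤N} |∑_{ℓ≠0} c_{μ+ℓ(2N+1)}|² ⟨μ/k⟩^{2q} + ∑_{|n|≥N+1} |c_n|² ⟨n/k⟩^{2q}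
  ≤ C (k/N)^{2(t−q)} Σ_t`. -/
theorem stmt_7 (t q : ℝ) (hq : 0 ≤ q) (hqt : q ≤ t) (ht : 1 / 2 < t) :
    ∃ C : ℝ, 0 < C ∧
      ∀ k : ℝ, 0 < k → ∀ N : ℕ, 1 ≤ N → k ≤ (N : ℝ) + 1 → ∀ c : ℤ → ℂ,
        (∑' n : ℤ, ENNReal.ofReal (‖c n‖ ^ 2 * jb ((n : ℝ) / k) ^ (2 * t))) < ⊤ →
        (∀ μ : ℤ, |μ| ≤ (N : ℤ) →
            Summable fun ℓ : {ℓ : ℤ // ℓ ≠ 0} =>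
              ‖c (μ + (ℓ : ℤ) * (2 * (N : ℤ) + 1))‖) ∧
        (∑' μ : {μ : ℤ // |μ| ≤ (N : ℤ)},
              ENNReal.ofReal
                (‖∑' ℓ : {ℓ : ℤ // ℓ ≠ 0}, c ((μ : ℤ) + (ℓ : ℤ) * (2 * (N : ℤ) + 1))‖ ^ 2 *
                  jb (((μ : ℤ) : ℝ) / k) ^ (2 * q)) +
            ∑' n : {n : ℤ // (N : ℤ) + 1 ≤ |n|},
              ENNReal.ofReal (‖c (n : ℤ)‖ ^ 2 * jb (((n : ℤ) : ℝ) / k) ^ (2 * q)))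
          ≤ ENNReal.ofReal (C * (k / (N : ℝ)) ^ (2 * (t - q))) *
            ∑' n : ℤ, ENNReal.ofReal (‖c n‖ ^ 2 * jb ((n : ℝ) / k) ^ (2 * t)) := by
  have h2t : (1:ℝ) < 2 * t := by linarith
  have hZs : Summable fun ℓ : ℤ => |(ℓ:ℝ)| ^ (-(2*t)) := Real.summable_abs_int_rpow h2t
  set Z : ℝ := ∑' ℓ : ℤ, |(ℓ:ℝ)| ^ (-(2*t)) with hZdef
  have hZ0 : 0 ≤ Z := tsum_nonneg fun n => Real.rpow_nonneg (abs_nonneg _) _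
  have h5q : (0:ℝ) < (5:ℝ) ^ q := Real.rpow_pos_of_pos (by norm_num) q
  refine ⟨Z * (5:ℝ) ^ q + 1, by positivity, ?_⟩
  intro k hk N hN hkN c hA
  set M : ℤ := 2 * (N:ℤ) + 1 with hMdef
  have hM0 : (0:ℤ) < M := by positivity
  have hN1 : (1:ℝ) ≤ (N:ℝ) := by exact_mod_cast hN
  have hNZ : (1:ℤ) ≤ (N:ℤ) := by exact_mod_cast hN
  have hNpos : (0:ℝ) < (N:ℝ) := by linarith
  set w : ℤ → ℝ := fun n => jb ((n:ℝ)/k) ^ (2*t) with hwdef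
  have hw_nonneg : ∀ n, 0 ≤ w n := fun n => Real.rpow_nonneg (jb_nonneg _) _
  set P : ℝ := k / (N:ℝ) with hPdef
  have hP : 0 < P := div_pos hk hNpos
  have hP2 : P ≤ 2 := by
    rw [hPdef, div_le_iff₀ hNpos]; linarith
  set E : ℝ := P ^ (2*(t-q)) with hEdef
  have hE0 : 0 < E := Real.rpow_pos_of_pos hP _
  set K : ℝ := Z * (5:ℝ) ^ q * E with hKdef
  have hK0 : 0 ≤ K := by positivity
  -- base real summability
  have hS : Summable fun n : ℤ => ‖c n‖ ^ 2 * w n := by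
    refine (ENNReal.summable_toReal hA.ne).congr fun n => ?_
    exact ENNReal.toReal_ofReal
      (mul_nonneg (sq_nonneg _) (Real.rpow_nonneg (jb_nonneg _) _))
  have hjb_ge : ∀ n : ℤ, (|n| : ℝ) / k ≤ jb ((n:ℝ)/k) := by
    intro n
    have h := abs_le_jb ((n:ℝ)/k)
    rw [abs_div, abs_of_pos hk] at h
    simpa using h
  -- key per-μ facts
  have key : ∀ μ : ℤ, |μ| ≤ (N:ℤ) →
      (Summable fun ℓ : {ℓ : ℤ // ℓ ≠ 0} => ‖c (μ + (ℓ:ℤ) * M)‖) ∧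
      ‖∑' ℓ : {ℓ : ℤ // ℓ ≠ 0}, c (μ + (ℓ:ℤ) * M)‖ ^ 2 * jb ((μ:ℝ)/k) ^ (2*q) ≤
        K * ∑' ℓ : {ℓ : ℤ // ℓ ≠ 0}, (‖c (μ + (ℓ:ℤ) * M)‖ ^ 2 * w (μ + (ℓ:ℤ) * M)) := by
    intro μ hμ
    set d : {ℓ : ℤ // ℓ ≠ 0} → ℤ := fun ℓ => μ + (ℓ:ℤ) * M with hddef
    have hd_inj : Function.Injective d := by
      intro a b hab
      simp only [hddef, add_right_inj] at hab
      exact Subtype.ext (mul_right_cancel₀ (by exact_mod_cast hM0.ne') hab)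
    have habs : ∀ ℓ : {ℓ : ℤ // ℓ ≠ 0}, (|(ℓ:ℤ)| * (N:ℤ) : ℤ) ≤ |d ℓ| := by
      intro ℓ
      have h1 : (1:ℤ) ≤ |(ℓ:ℤ)| := Int.one_le_abs ℓ.2
      have h2 : |(ℓ:ℤ) * M| ≤ |d ℓ| + |μ| := by
        have he : (ℓ:ℤ) * M = d ℓ + (-μ) := by simp only [hddef]; ring
        rw [he]
        exact (abs_add_le _ _).trans (by rw [abs_neg])
      have h3 : |(ℓ:ℤ) * M| = |(ℓ:ℤ)| * M := by rw [abs_mul, abs_of_pos hM0]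
      nlinarith [h1, h2, h3, hμ, hMdef, hNZ]
    have hwinv : ∀ ℓ : {ℓ : ℤ // ℓ ≠ 0},
        (w (d ℓ))⁻¹ ≤ P ^ (2*t) * |((ℓ:ℤ):ℝ)| ^ (-(2*t)) := by
      intro ℓ
      have hL1 : (1:ℝ) ≤ |((ℓ:ℤ):ℝ)| := by
        have := Int.one_le_abs ℓ.2
        calc (1:ℝ) = ((1:ℤ):ℝ) := by norm_num
          _ ≤ ((|(ℓ:ℤ)| : ℤ):ℝ) := by exact_mod_cast this
          _ = |((ℓ:ℤ):ℝ)| := by push_cast; ring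
      have hLpos : (0:ℝ) < |((ℓ:ℤ):ℝ)| := by linarith
      have habs' : |((ℓ:ℤ):ℝ)| * (N:ℝ) ≤ |((d ℓ : ℤ):ℝ)| := by
        have := habs ℓ
        calc |((ℓ:ℤ):ℝ)| * (N:ℝ) = ((|(ℓ:ℤ)| * (N:ℤ) : ℤ) : ℝ) := by push_cast; ring
          _ ≤ ((|d ℓ| : ℤ) : ℝ) := by exact_mod_cast this
          _ = |((d ℓ : ℤ):ℝ)| := by push_cast; ring
      have hjb2 : |((ℓ:ℤ):ℝ)| / P ≤ jb (((d ℓ : ℤ):ℝ)/k) := by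
        refine le_trans ?_ (hjb_ge (d ℓ))
        rw [hPdef, div_div_eq_mul_div]
        gcongr
      have hw_ge : (|((ℓ:ℤ):ℝ)| / P) ^ (2*t) ≤ w (d ℓ) :=
        Real.rpow_le_rpow (by positivity) hjb2 (by linarith)
      have hpos : (0:ℝ) < (|((ℓ:ℤ):ℝ)| / P) ^ (2*t) :=
        Real.rpow_pos_of_pos (div_pos hLpos hP) _
      have hinv : (w (d ℓ))⁻¹ ≤ ((|((ℓ:ℤ):ℝ)| / P) ^ (2*t))⁻¹ :=
        inv_anti₀ hpos hw_ge
      refine hinv.trans_eq ?_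
      rw [Real.div_rpow (abs_nonneg _) hP.le, inv_div, div_eq_mul_inv,
        ← Real.rpow_neg (abs_nonneg _)]
    -- summabilities
    have hg2 : Summable fun ℓ : {ℓ : ℤ // ℓ ≠ 0} => ‖c (d ℓ)‖ ^ 2 * w (d ℓ) := by
      simpa [Function.comp_def] using hS.comp_injective hd_inj
    have hZsub : Summable fun ℓ : {ℓ : ℤ // ℓ ≠ 0} => |((ℓ:ℤ):ℝ)| ^ (-(2*t)) := by
      simpa [Function.comp_def] using hZs.comp_injective (Subtype.val_injective :
        Function.Injective ((↑) : {ℓ : ℤ // ℓ ≠ 0} → ℤ))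
    have hf2 : Summable fun ℓ : {ℓ : ℤ // ℓ ≠ 0} => (w (d ℓ))⁻¹ := by
      refine Summable.of_nonneg_of_le (fun ℓ => inv_nonneg.2 (hw_nonneg _)) hwinv
        (hZsub.mul_left _)
    -- Cauchy-Schwarz
    obtain ⟨hsumfg, hcs⟩ := tsum_cs
      (f := fun ℓ : {ℓ : ℤ // ℓ ≠ 0} => Real.sqrt ((w (d ℓ))⁻¹))
      (g := fun ℓ : {ℓ : ℤ // ℓ ≠ 0} => Real.sqrt (w (d ℓ)) * ‖c (d ℓ)‖)
      (fun ℓ => Real.sqrt_nonneg _)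
      (fun ℓ => mul_nonneg (Real.sqrt_nonneg _) (norm_nonneg _))
      (by
        refine hf2.congr fun ℓ => ?_
        rw [Real.sq_sqrt (inv_nonneg.2 (hw_nonneg _))])
      (by
        refine hg2.congr fun ℓ => ?_
        rw [mul_pow, Real.sq_sqrt (hw_nonneg _)]; ring)
    have hwpos : ∀ n : ℤ, 0 < w n := fun n => Real.rpow_pos_of_pos (jb_pos _) _
    have hfg_eq : ∀ ℓ : {ℓ : ℤ // ℓ ≠ 0},
        Real.sqrt ((w (d ℓ))⁻¹) * (Real.sqrt (w (d ℓ)) * ‖c (d ℓ)‖) = ‖c (d ℓ)‖ := by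
      intro ℓ
      rw [← mul_assoc, ← Real.sqrt_mul (inv_nonneg.2 (hw_nonneg _)),
        inv_mul_cancel₀ (hwpos _).ne', Real.sqrt_one, one_mul]
    have hsum_norm : Summable fun ℓ : {ℓ : ℤ // ℓ ≠ 0} => ‖c (d ℓ)‖ :=
      hsumfg.congr hfg_eq
    refine ⟨hsum_norm, ?_⟩
    -- convert the CS inequality
    have hcs' : (∑' ℓ : {ℓ : ℤ // ℓ ≠ 0}, ‖c (d ℓ)‖) ^ 2 ≤
        (∑' ℓ : {ℓ : ℤ // ℓ ≠ 0}, (w (d ℓ))⁻¹) *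
          ∑' ℓ : {ℓ : ℤ // ℓ ≠ 0}, (‖c (d ℓ)‖ ^ 2 * w (d ℓ)) := by
      have e1 : (∑' ℓ : {ℓ : ℤ // ℓ ≠ 0}, ‖c (d ℓ)‖) =
          ∑' ℓ : {ℓ : ℤ // ℓ ≠ 0},
            Real.sqrt ((w (d ℓ))⁻¹) * (Real.sqrt (w (d ℓ)) * ‖c (d ℓ)‖) :=
        tsum_congr fun ℓ => (hfg_eq ℓ).symm
      have e2 : (∑' ℓ : {ℓ : ℤ // ℓ ≠ 0}, Real.sqrt ((w (d ℓ))⁻¹) ^ 2) =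
          ∑' ℓ : {ℓ : ℤ // ℓ ≠ 0}, (w (d ℓ))⁻¹ :=
        tsum_congr fun ℓ => by rw [Real.sq_sqrt (inv_nonneg.2 (hw_nonneg _))]
      have e3 : (∑' ℓ : {ℓ : ℤ // ℓ ≠ 0}, (Real.sqrt (w (d ℓ)) * ‖c (d ℓ)‖) ^ 2) =
          ∑' ℓ : {ℓ : ℤ // ℓ ≠ 0}, (‖c (d ℓ)‖ ^ 2 * w (d ℓ)) :=
        tsum_congr fun ℓ => by rw [mul_pow, Real.sq_sqrt (hw_nonneg _)]; ring
      rw [e1]; rw [e2, e3] at hcs; exact hcs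
    -- bound the inverse-weight sum
    have hSinv : (∑' ℓ : {ℓ : ℤ // ℓ ≠ 0}, (w (d ℓ))⁻¹) ≤ P ^ (2*t) * Z := by
      have step1 : (∑' ℓ : {ℓ : ℤ // ℓ ≠ 0}, (w (d ℓ))⁻¹) ≤
          ∑' ℓ : {ℓ : ℤ // ℓ ≠ 0}, P ^ (2*t) * |((ℓ:ℤ):ℝ)| ^ (-(2*t)) :=
        Summable.tsum_le_tsum hwinv hf2 (hZsub.mul_left _)
      have step2 : (∑' ℓ : {ℓ : ℤ // ℓ ≠ 0}, |((ℓ:ℤ):ℝ)| ^ (-(2*t))) ≤ Z := by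
        refine Summable.tsum_le_tsum_of_inj (Subtype.val : {ℓ : ℤ // ℓ ≠ 0} → ℤ)
          Subtype.val_injective (fun n _ => Real.rpow_nonneg (abs_nonneg _) _)
          (fun ℓ => le_refl _) hZsub hZs
      calc (∑' ℓ : {ℓ : ℤ // ℓ ≠ 0}, (w (d ℓ))⁻¹) ≤
            ∑' ℓ : {ℓ : ℤ // ℓ ≠ 0}, P ^ (2*t) * |((ℓ:ℤ):ℝ)| ^ (-(2*t)) := step1
        _ = P ^ (2*t) * ∑' ℓ : {ℓ : ℤ // ℓ ≠ 0}, |((ℓ:ℤ):ℝ)| ^ (-(2*t)) := tsum_mul_left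
        _ ≤ P ^ (2*t) * Z := by
            exact mul_le_mul_of_nonneg_left step2 (Real.rpow_nonneg hP.le _)
    -- bound on the bracket factor
    have hbr : jb ((μ:ℝ)/k) ^ (2*q) ≤ (5:ℝ)^q * P ^ (-(2*q)) := by
      have hμR : |(μ:ℝ)| ≤ (N:ℝ) := by exact_mod_cast (by exact_mod_cast hμ : ((|μ|:ℤ):ℝ) ≤ ((N:ℤ):ℝ))
      have hhalf : (1:ℝ) ≤ 2 * ((N:ℝ)/k) := by
        rw [show 2*((N:ℝ)/k) = 2*(N:ℝ)/k by ring, le_div_iff₀ hk]; linarith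
      have h1 : ((μ:ℝ)/k) ^ 2 ≤ ((N:ℝ)/k) ^ 2 := by
        have habsd : |(μ:ℝ)/k| ≤ (N:ℝ)/k := by
          rw [abs_div, abs_of_pos hk]
          gcongr
        calc ((μ:ℝ)/k)^2 = |(μ:ℝ)/k|^2 := (sq_abs _).symm
          _ ≤ ((N:ℝ)/k)^2 := pow_le_pow_left₀ (abs_nonneg _) habsd 2
      have hjb_le : jb ((μ:ℝ)/k) ≤ Real.sqrt 5 * ((N:ℝ)/k) := by
        rw [jb]
        have hle : (1 + ((μ:ℝ)/k)^2) ≤ 5 * ((N:ℝ)/k)^2 := by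
          nlinarith [h1, hhalf, sq_nonneg (2*((N:ℝ)/k) - 1)]
        calc Real.sqrt (1 + ((μ:ℝ)/k)^2) ≤ Real.sqrt (5 * ((N:ℝ)/k)^2) :=
              Real.sqrt_le_sqrt hle
          _ = Real.sqrt 5 * ((N:ℝ)/k) := by
              rw [Real.sqrt_mul (by norm_num), Real.sqrt_sq (by positivity)]
      calc jb ((μ:ℝ)/k) ^ (2*q) ≤ (Real.sqrt 5 * ((N:ℝ)/k)) ^ (2*q) :=
            Real.rpow_le_rpow (jb_nonneg _) hjb_le (by linarith)
        _ = (5:ℝ)^q * P ^ (-(2*q)) := by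
            rw [Real.mul_rpow (Real.sqrt_nonneg _) (by positivity)]
            congr 1
            · rw [Real.rpow_mul (Real.sqrt_nonneg _)]
              congr 1
              rw [show ((2:ℝ)) = ((2:ℕ):ℝ) by norm_num, Real.rpow_natCast,
                Real.sq_sqrt (by norm_num : (0:ℝ) ≤ 5)]
            · rw [show ((N:ℝ)/k) = P⁻¹ by rw [hPdef, inv_div],
                Real.inv_rpow hP.le, ← Real.rpow_neg hP.le]
    -- put it together
    have hT : ‖∑' ℓ : {ℓ : ℤ // ℓ ≠ 0}, c (d ℓ)‖ ≤ ∑' ℓ : {ℓ : ℤ // ℓ ≠ 0}, ‖c (d ℓ)‖ :=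
      norm_tsum_le_tsum_norm hsum_norm
    have hT2 : ‖∑' ℓ : {ℓ : ℤ // ℓ ≠ 0}, c (d ℓ)‖ ^ 2 ≤
        (P ^ (2*t) * Z) * ∑' ℓ : {ℓ : ℤ // ℓ ≠ 0}, (‖c (d ℓ)‖ ^ 2 * w (d ℓ)) := by
      have hG0 : 0 ≤ ∑' ℓ : {ℓ : ℤ // ℓ ≠ 0}, (‖c (d ℓ)‖ ^ 2 * w (d ℓ)) :=
        tsum_nonneg fun ℓ => mul_nonneg (sq_nonneg _) (hw_nonneg _)
      calc ‖∑' ℓ : {ℓ : ℤ // ℓ ≠ 0}, c (d ℓ)‖ ^ 2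
          ≤ (∑' ℓ : {ℓ : ℤ // ℓ ≠ 0}, ‖c (d ℓ)‖) ^ 2 :=
            pow_le_pow_left₀ (norm_nonneg _) hT 2
        _ ≤ (∑' ℓ : {ℓ : ℤ // ℓ ≠ 0}, (w (d ℓ))⁻¹) *
              ∑' ℓ : {ℓ : ℤ // ℓ ≠ 0}, (‖c (d ℓ)‖ ^ 2 * w (d ℓ)) := hcs'
        _ ≤ (P ^ (2*t) * Z) * ∑' ℓ : {ℓ : ℤ // ℓ ≠ 0}, (‖c (d ℓ)‖ ^ 2 * w (d ℓ)) :=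
            mul_le_mul_of_nonneg_right hSinv hG0
    have hPP : P ^ (2*t) * P ^ (-(2*q)) = E := by
      rw [hEdef, ← Real.rpow_add hP]; congr 1; ring
    have hG0 : 0 ≤ ∑' ℓ : {ℓ : ℤ // ℓ ≠ 0}, (‖c (d ℓ)‖ ^ 2 * w (d ℓ)) :=
      tsum_nonneg fun ℓ => mul_nonneg (sq_nonneg _) (hw_nonneg _)
    calc ‖∑' ℓ : {ℓ : ℤ // ℓ ≠ 0}, c (d ℓ)‖ ^ 2 * jb ((μ:ℝ)/k) ^ (2*q)
        ≤ ((P ^ (2*t) * Z) * ∑' ℓ : {ℓ : ℤ // ℓ ≠ 0}, (‖c (d ℓ)‖ ^ 2 * w (d ℓ))) *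
            ((5:ℝ)^q * P ^ (-(2*q))) := by
          refine mul_le_mul hT2 hbr (Real.rpow_nonneg (jb_nonneg _) _) ?_
          positivity
      _ = K * ∑' ℓ : {ℓ : ℤ // ℓ ≠ 0}, (‖c (d ℓ)‖ ^ 2 * w (d ℓ)) := by
          rw [hKdef, ← hPP]; ring
  refine ⟨fun μ hμ => (key μ hμ).1, ?_⟩
  -- ENNReal assembly
  set A : ENNReal := ∑' n : ℤ, ENNReal.ofReal (‖c n‖ ^ 2 * w n) with hAdef
  -- aliasing part
  have halias : (∑' μ : {μ : ℤ // |μ| ≤ (N : ℤ)},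
      ENNReal.ofReal
        (‖∑' ℓ : {ℓ : ℤ // ℓ ≠ 0}, c ((μ : ℤ) + (ℓ : ℤ) * M)‖ ^ 2 *
          jb (((μ : ℤ) : ℝ) / k) ^ (2 * q))) ≤ ENNReal.ofReal K * A := by
    have step1 : (∑' μ : {μ : ℤ // |μ| ≤ (N : ℤ)},
        ENNReal.ofReal
          (‖∑' ℓ : {ℓ : ℤ // ℓ ≠ 0}, c ((μ : ℤ) + (ℓ : ℤ) * M)‖ ^ 2 *
            jb (((μ : ℤ) : ℝ) / k) ^ (2 * q))) ≤
        ∑' μ : {μ : ℤ // |μ| ≤ (N : ℤ)},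
          ENNReal.ofReal K *
            ENNReal.ofReal
              (∑' ℓ : {ℓ : ℤ // ℓ ≠ 0}, (‖c ((μ:ℤ) + (ℓ:ℤ) * M)‖ ^ 2 * w ((μ:ℤ) + (ℓ:ℤ) * M))) := by
      refine ENNReal.tsum_le_tsum fun μ => ?_
      rw [← ENNReal.ofReal_mul hK0]
      exact ENNReal.ofReal_le_ofReal ((key (μ:ℤ) μ.2).2)
    have step2 : (∑' μ : {μ : ℤ // |μ| ≤ (N : ℤ)},
        ENNReal.ofReal
          (∑' ℓ : {ℓ : ℤ // ℓ ≠ 0}, (‖c ((μ:ℤ) + (ℓ:ℤ) * M)‖ ^ 2 * w ((μ:ℤ) + (ℓ:ℤ) * M)))) ≤ A := by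
      have hrw : ∀ μ : {μ : ℤ // |μ| ≤ (N : ℤ)},
          ENNReal.ofReal
            (∑' ℓ : {ℓ : ℤ // ℓ ≠ 0}, (‖c ((μ:ℤ) + (ℓ:ℤ) * M)‖ ^ 2 * w ((μ:ℤ) + (ℓ:ℤ) * M))) =
          ∑' ℓ : {ℓ : ℤ // ℓ ≠ 0},
            ENNReal.ofReal (‖c ((μ:ℤ) + (ℓ:ℤ) * M)‖ ^ 2 * w ((μ:ℤ) + (ℓ:ℤ) * M)) := by
        intro μ
        refine ENNReal.ofReal_tsum_of_nonneg
          (fun ℓ => mul_nonneg (sq_nonneg _) (hw_nonneg _)) ?_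
        have hd_inj : Function.Injective
            (fun ℓ : {ℓ : ℤ // ℓ ≠ 0} => (μ:ℤ) + (ℓ:ℤ) * M) := by
          intro a b hab
          simp only [add_right_inj] at hab
          exact Subtype.ext (mul_right_cancel₀ (by exact_mod_cast hM0.ne') hab)
        simpa [Function.comp_def] using hS.comp_injective hd_inj
      calc (∑' μ : {μ : ℤ // |μ| ≤ (N : ℤ)},
            ENNReal.ofReal
              (∑' ℓ : {ℓ : ℤ // ℓ ≠ 0}, (‖c ((μ:ℤ) + (ℓ:ℤ) * M)‖ ^ 2 * w ((μ:ℤ) + (ℓ:ℤ) * M))))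
          = ∑' μ : {μ : ℤ // |μ| ≤ (N : ℤ)}, ∑' ℓ : {ℓ : ℤ // ℓ ≠ 0},
              ENNReal.ofReal (‖c ((μ:ℤ) + (ℓ:ℤ) * M)‖ ^ 2 * w ((μ:ℤ) + (ℓ:ℤ) * M)) :=
            tsum_congr hrw
        _ = ∑' p : {μ : ℤ // |μ| ≤ (N : ℤ)} × {ℓ : ℤ // ℓ ≠ 0},
              ENNReal.ofReal (‖c ((p.1:ℤ) + (p.2:ℤ) * M)‖ ^ 2 * w ((p.1:ℤ) + (p.2:ℤ) * M)) :=
            (ENNReal.tsum_prod).symm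
        _ ≤ A := by
            have he_inj : Function.Injective
                (fun p : {μ : ℤ // |μ| ≤ (N : ℤ)} × {ℓ : ℤ // ℓ ≠ 0} =>
                  (p.1 : ℤ) + (p.2 : ℤ) * M) := by
              rintro ⟨⟨μ₁, h₁⟩, ⟨ℓ₁, e₁⟩⟩ ⟨⟨μ₂, h₂⟩, ⟨ℓ₂, e₂⟩⟩ h
              simp only at h
              have hll : ℓ₁ = ℓ₂ := by
                by_contra hne
                have h1 : (1:ℤ) ≤ |ℓ₁ - ℓ₂| := Int.one_le_abs (sub_ne_zero.2 hne)
                have h2 : |(ℓ₁ - ℓ₂) * M| = |ℓ₁ - ℓ₂| * M := by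
                  rw [abs_mul, abs_of_pos hM0]
                have h3 : (ℓ₁ - ℓ₂) * M = μ₂ - μ₁ := by linear_combination h
                have h4 : M ≤ |ℓ₁ - ℓ₂| * M := le_mul_of_one_le_left hM0.le h1
                have h5 : |μ₂ - μ₁| ≤ 2 * (N:ℤ) := by
                  have := abs_le.1 h₁; have := abs_le.1 h₂
                  rw [abs_le]; omega
                rw [← h2, h3] at h4
                omega
              subst hll
              have hmm : μ₁ = μ₂ := by linarith [h]
              subst hmm
              rfl
            exact ENNReal.tsum_comp_le_tsum_of_injective he_inj
              (fun n => ENNReal.ofReal (‖c n‖ ^ 2 * w n))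
    calc (∑' μ : {μ : ℤ // |μ| ≤ (N : ℤ)},
        ENNReal.ofReal
          (‖∑' ℓ : {ℓ : ℤ // ℓ ≠ 0}, c ((μ : ℤ) + (ℓ : ℤ) * M)‖ ^ 2 *
            jb (((μ : ℤ) : ℝ) / k) ^ (2 * q)))
        ≤ ∑' μ : {μ : ℤ // |μ| ≤ (N : ℤ)},
            ENNReal.ofReal K *
              ENNReal.ofReal
                (∑' ℓ : {ℓ : ℤ // ℓ ≠ 0},
                  (‖c ((μ:ℤ) + (ℓ:ℤ) * M)‖ ^ 2 * w ((μ:ℤ) + (ℓ:ℤ) * M))) := step1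
      _ = ENNReal.ofReal K * ∑' μ : {μ : ℤ // |μ| ≤ (N : ℤ)},
            ENNReal.ofReal
              (∑' ℓ : {ℓ : ℤ // ℓ ≠ 0},
                (‖c ((μ:ℤ) + (ℓ:ℤ) * M)‖ ^ 2 * w ((μ:ℤ) + (ℓ:ℤ) * M))) := ENNReal.tsum_mul_left
      _ ≤ ENNReal.ofReal K * A := mul_le_mul_right step2 _
  -- tail part
  have htail : (∑' n : {n : ℤ // (N : ℤ) + 1 ≤ |n|},
      ENNReal.ofReal (‖c (n : ℤ)‖ ^ 2 * jb (((n : ℤ) : ℝ) / k) ^ (2 * q))) ≤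
      ENNReal.ofReal E * A := by
    have hterm : ∀ n : {n : ℤ // (N : ℤ) + 1 ≤ |n|},
        ‖c (n : ℤ)‖ ^ 2 * jb (((n : ℤ) : ℝ) / k) ^ (2 * q) ≤
          E * (‖c (n:ℤ)‖ ^ 2 * w (n:ℤ)) := by
      intro n
      have hjbn : P⁻¹ ≤ jb (((n:ℤ):ℝ)/k) := by
        refine le_trans ?_ (hjb_ge (n:ℤ))
        rw [hPdef, inv_div]
        have h1 : (N:ℝ) ≤ |((n:ℤ):ℝ)| := by
          have := n.2
          have h2 : ((N:ℤ):ℝ) + 1 ≤ ((|(n:ℤ)| : ℤ):ℝ) := by exact_mod_cast this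
          have h3 : ((|(n:ℤ)| : ℤ):ℝ) = |((n:ℤ):ℝ)| := by push_cast; ring
          push_cast at h2 ⊢
          linarith [h3 ▸ h2]
        gcongr
      have hsplit : jb (((n:ℤ):ℝ)/k) ^ (2*q) =
          jb (((n:ℤ):ℝ)/k) ^ (2*t) * jb (((n:ℤ):ℝ)/k) ^ (2*q - 2*t) := by
        rw [← Real.rpow_add (jb_pos _)]; congr 1; ring
      have hdecay : jb (((n:ℤ):ℝ)/k) ^ (2*q - 2*t) ≤ E := by
        have h1 : jb (((n:ℤ):ℝ)/k) ^ (2*q - 2*t) ≤ (P⁻¹) ^ (2*q - 2*t) :=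
          Real.rpow_le_rpow_of_nonpos (inv_pos.2 hP) hjbn (by linarith)
        refine h1.trans_eq ?_
        rw [Real.inv_rpow hP.le, ← Real.rpow_neg hP.le, hEdef]
        congr 1; ring
      calc ‖c (n : ℤ)‖ ^ 2 * jb (((n : ℤ) : ℝ) / k) ^ (2 * q)
          = ‖c (n:ℤ)‖ ^ 2 * (jb (((n:ℤ):ℝ)/k) ^ (2*t) * jb (((n:ℤ):ℝ)/k) ^ (2*q - 2*t)) := by
            rw [← hsplit]
        _ ≤ ‖c (n:ℤ)‖ ^ 2 * (jb (((n:ℤ):ℝ)/k) ^ (2*t) * E) := by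
            refine mul_le_mul_of_nonneg_left ?_ (sq_nonneg _)
            exact mul_le_mul_of_nonneg_left hdecay (Real.rpow_nonneg (jb_nonneg _) _)
        _ = E * (‖c (n:ℤ)‖ ^ 2 * w (n:ℤ)) := by rw [hwdef]; ring
    calc (∑' n : {n : ℤ // (N : ℤ) + 1 ≤ |n|},
        ENNReal.ofReal (‖c (n : ℤ)‖ ^ 2 * jb (((n : ℤ) : ℝ) / k) ^ (2 * q)))
        ≤ ∑' n : {n : ℤ // (N : ℤ) + 1 ≤ |n|},
            ENNReal.ofReal E * ENNReal.ofReal (‖c (n:ℤ)‖ ^ 2 * w (n:ℤ)) := by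
          refine ENNReal.tsum_le_tsum fun n => ?_
          rw [← ENNReal.ofReal_mul hE0.le]
          exact ENNReal.ofReal_le_ofReal (hterm n)
      _ = ENNReal.ofReal E * ∑' n : {n : ℤ // (N : ℤ) + 1 ≤ |n|},
            ENNReal.ofReal (‖c (n:ℤ)‖ ^ 2 * w (n:ℤ)) := ENNReal.tsum_mul_left
      _ ≤ ENNReal.ofReal E * A := by
          refine mul_le_mul_right ?_ _
          exact ENNReal.tsum_comp_le_tsum_of_injective Subtype.val_injective
            (fun n => ENNReal.ofReal (‖c n‖ ^ 2 * w n))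
  calc (∑' μ : {μ : ℤ // |μ| ≤ (N : ℤ)},
        ENNReal.ofReal
          (‖∑' ℓ : {ℓ : ℤ // ℓ ≠ 0}, c ((μ : ℤ) + (ℓ : ℤ) * M)‖ ^ 2 *
            jb (((μ : ℤ) : ℝ) / k) ^ (2 * q)) +
      ∑' n : {n : ℤ // (N : ℤ) + 1 ≤ |n|},
        ENNReal.ofReal (‖c (n : ℤ)‖ ^ 2 * jb (((n : ℤ) : ℝ) / k) ^ (2 * q)))
      ≤ ENNReal.ofReal K * A + ENNReal.ofReal E * A := add_le_add halias htail
    _ = ENNReal.ofReal (K + E) * A := by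
        rw [ENNReal.ofReal_add hK0 hE0.le, add_mul]
    _ = ENNReal.ofReal ((Z * (5:ℝ)^q + 1) * E) * A := by
        rw [hKdef]; ring_nf
    _ = ENNReal.ofReal ((Z * (5:ℝ)^q + 1) * (k / (N:ℝ)) ^ (2*(t-q))) * A := by
        rw [hEdef, hPdef]
end

section
/- Let N, n ∈ ℕ and m ∈ ℤ with n ≤ N, and let a : ℤ → ℂ satisfy a_{m'} = 0 whenever |m'| > n. Define b : ℤ → ℂ by b_ξ := −∑_{ℓ ∈ ℤ, ℓ ≠ 0} a_{ξ + ℓ(2N+1) − m} for |ξ| ≤ N, and b_ξ := a_{ξ − m} for |ξ| > N (all these sums have only finitely many nonzero terms). Then: (i) if n + |m| ≤ N, then b_ξ = 0 for every ξ ∈ ℤ; (ii) if n + |m| ≤ 2N, then b_ξ = 0 for every ξ with |ξ| ≤ 2N − n − |m|. -/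
lemma stmt_9_key (N n : ℕ) (m ξ : ℤ) (a : ℤ → ℂ)
    (ha : ∀ m' : ℤ, (n : ℤ) < |m'| → a m' = 0)
    (h : |ξ| + |m| + (n : ℤ) ≤ 2 * (N : ℤ)) :
    ∀ ℓ : {ℓ : ℤ // ℓ ≠ 0}, a (ξ + (ℓ : ℤ) * (2 * (N : ℤ) + 1) - m) = 0 := by
  rintro ⟨ℓ, hℓ⟩
  apply ha
  have h1 : (1 : ℤ) ≤ |ℓ| := Int.one_le_abs (by omega)
  have h2 : 2 * (N : ℤ) + 1 ≤ |ℓ * (2 * (N : ℤ) + 1)| := by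
    rw [abs_mul, abs_of_nonneg (by positivity : (0:ℤ) ≤ 2 * (N : ℤ) + 1)]
    nlinarith
  have h3 : |ℓ * (2 * (N : ℤ) + 1)| ≤ |ξ + ℓ * (2 * (N : ℤ) + 1) - m| + (|ξ| + |m|) := by
    have e : ℓ * (2 * (N : ℤ) + 1) = (ξ + ℓ * (2 * (N : ℤ) + 1) - m) + (-(ξ - m)) := by ring
    calc |ℓ * (2 * (N : ℤ) + 1)|
        = |(ξ + ℓ * (2 * (N : ℤ) + 1) - m) + (-(ξ - m))| := by rw [← e]
      _ ≤ |ξ + ℓ * (2 * (N : ℤ) + 1) - m| + |(-(ξ - m))| := abs_add_le _ _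
      _ ≤ |ξ + ℓ * (2 * (N : ℤ) + 1) - m| + (|ξ| + |m|) := by
          rw [abs_neg]
          have : |ξ - m| ≤ |ξ| + |m| := abs_sub ξ m
          linarith
  linarith

/-- Aliasing lemma in Fourier-coefficient form: let `a` be the Fourier coefficients of a
trigonometric polynomial of degree `≤ n ≤ N`, `m : ℤ`, and let `b` be the Fourier
coefficients of `(I − P^C_N)(e^{imt} v)`, i.e.
`b_ξ = −∑_{ℓ≠0} a_{ξ+ℓ(2N+1)−m}` for `|ξ| ≤ N` and `b_ξ = a_{ξ−m}` for `|ξ| > N`.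
Then (i) if `n + |m| ≤ N` then `b ≡ 0`; (ii) if `n + |m| ≤ 2N` then `b_ξ = 0` for all
`|ξ| ≤ 2N − n − |m|`. -/
theorem stmt_9 (N n : ℕ) (m : ℤ) (hn : n ≤ N) (a : ℤ → ℂ)
    (ha : ∀ m' : ℤ, (n : ℤ) < |m'| → a m' = 0) (b : ℤ → ℂ)
    (hb1 : ∀ ξ : ℤ, |ξ| ≤ (N : ℤ) →
      b ξ = -∑' ℓ : {ℓ : ℤ // ℓ ≠ 0}, a (ξ + (ℓ : ℤ) * (2 * (N : ℤ) + 1) - m))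
    (hb2 : ∀ ξ : ℤ, (N : ℤ) < |ξ| → b ξ = a (ξ - m)) :
    ((n : ℤ) + |m| ≤ (N : ℤ) → ∀ ξ : ℤ, b ξ = 0) ∧
      ((n : ℤ) + |m| ≤ 2 * (N : ℤ) →
        ∀ ξ : ℤ, |ξ| ≤ 2 * (N : ℤ) - (n : ℤ) - |m| → b ξ = 0) := by
  constructor
  · intro h ξ
    rcases le_or_gt |ξ| (N : ℤ) with hc | hc
    · rw [hb1 ξ hc, tsum_congr (stmt_9_key N n m ξ a ha (by linarith)), tsum_zero, neg_zero]
    · rw [hb2 ξ hc]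
      apply ha
      have := abs_sub_abs_le_abs_sub ξ m
      linarith
  · intro h ξ hξ
    rcases le_or_gt |ξ| (N : ℤ) with hc | hc
    · rw [hb1 ξ hc, tsum_congr (stmt_9_key N n m ξ a ha (by linarith)), tsum_zero, neg_zero]
    · rw [hb2 ξ hc]
      apply ha
      have := abs_sub_abs_le_abs_sub ξ m
      linarith
end

section
/- Let γ : ℝ → ℝ² be infinitely differentiable and 2π-periodic, with γ'(t) ≠ 0 for every t, and suppose γ is injective on [0, 2π). Then there exist an infinitely differentiable function e : ℝ × ℝ → ℝ, 2π-periodic in each of its two variables, and a constant c > 0, such that for all t, τ ∈ ℝ: ‖γ(t) − γ(τ)‖² = 4 sin²((t − τ)/2) · e(t, τ) and e(t, τ) ≥ c. -/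
open MeasureTheory Real ContinuousLinearMap

set_option maxHeartbeats 1000000
set_option synthInstance.maxHeartbeats 400000

section Param
variable {E : Type*} [NormedAddCommGroup E] [NormedSpace ℝ E] [CompleteSpace E]

lemma paramInt_contDiff_nat (n : ℕ) :
    ∀ (g : ℝ → E), ContDiff ℝ (⊤ : ℕ∞) g → ∀ (w : ℝ → ℝ), Continuous w →
    ContDiff ℝ (n : ℕ) (fun p : ℝ × ℝ => ∫ s in (0:ℝ)..1, w s • g (p.2 + s * p.1)) := by
  induction n with
  | zero =>
      intro g hg w hw
      rw [Nat.cast_zero, contDiff_zero]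
      exact intervalIntegral.continuous_parametric_intervalIntegral_of_continuous'
        (by have := hg.continuous; fun_prop) _ _
  | succ n ih =>
      intro g hg w hw
      have hg' : ContDiff ℝ (⊤ : ℕ∞) (deriv g) := (contDiff_infty_iff_deriv.mp hg).2
      have hgc : Continuous g := hg.continuous
      have hg'c : Continuous (deriv g) := hg'.continuous
      have hgdiff : Differentiable ℝ g := hg.differentiable (by simp)
      set g' := deriv g with hg'def
      set L1 : E →L[ℝ] (ℝ × ℝ) →L[ℝ] E := smulRightL ℝ (ℝ × ℝ) E (fst ℝ ℝ ℝ) with hL1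
      set L2 : E →L[ℝ] (ℝ × ℝ) →L[ℝ] E := smulRightL ℝ (ℝ × ℝ) E (snd ℝ ℝ ℝ) with hL2
      set Φ1 : ℝ × ℝ → E := fun p => ∫ s in (0:ℝ)..1, (s * w s) • g' (p.2 + s * p.1) with hΦ1
      set Φ2 : ℝ × ℝ → E := fun p => ∫ s in (0:ℝ)..1, w s • g' (p.2 + s * p.1) with hΦ2
      set D : ℝ × ℝ → (ℝ × ℝ) →L[ℝ] E := fun p => L1 (Φ1 p) + L2 (Φ2 p) with hD
      have key : ∀ p : ℝ × ℝ,
          HasFDerivAt (fun q : ℝ × ℝ => ∫ s in (0:ℝ)..1, w s • g (q.2 + s * q.1)) (D p) p := by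
        intro p
        obtain ⟨M, hM⟩ := (isCompact_closedBall (0:ℝ)
          (|p.2| + |p.1| + 3)).exists_bound_of_continuousOn (hg'c.continuousOn)
        obtain ⟨W, hW⟩ := (isCompact_Icc (a := (0:ℝ)) (b := 1)).exists_bound_of_continuousOn
          (hw.continuousOn)
        have hM0 : ∀ y : ℝ, |y| ≤ |p.2| + |p.1| + 2 → ‖g' y‖ ≤ M := by
          intro y hy
          apply hM
          simp only [Metric.mem_closedBall, dist_zero_right, Real.norm_eq_abs]
          linarith
        have hMpos : (0:ℝ) ≤ M :=
          le_trans (norm_nonneg _) (hM0 0 (by simp; positivity))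
        have hW1 : ∀ s : ℝ, s ∈ Set.uIoc (0:ℝ) 1 → |w s| ≤ W := by
          intro s hs
          rw [Set.uIoc_of_le zero_le_one] at hs
          have := hW s ⟨hs.1.le, hs.2⟩
          rwa [Real.norm_eq_abs] at this
        have hmem : ∀ x : ℝ × ℝ, x ∈ Metric.ball p 1 → ∀ s ∈ Set.uIoc (0:ℝ) 1,
            |x.2 + s * x.1| ≤ |p.2| + |p.1| + 2 := by
          intro x hx s hs
          rw [Set.uIoc_of_le zero_le_one] at hs
          have h1 : |x.1 - p.1| ≤ ‖x - p‖ := by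
            have := norm_fst_le (x - p); simpa using this
          have h2 : |x.2 - p.2| ≤ ‖x - p‖ := by
            have := norm_snd_le (x - p); simpa using this
          have hxp : ‖x - p‖ < 1 := by
            rw [Metric.mem_ball, dist_eq_norm] at hx; exact hx
          have hx1 : |x.1| ≤ |p.1| + 1 := by
            have := abs_sub_abs_le_abs_sub x.1 p.1; linarith
          have hx2 : |x.2| ≤ |p.2| + 1 := by
            have := abs_sub_abs_le_abs_sub x.2 p.2; linarith
          have h3 : |x.2 + s * x.1| ≤ |x.2| + s * |x.1| := by
            calc |x.2 + s * x.1| ≤ |x.2| + |s * x.1| := abs_add_le _ _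
            _ = |x.2| + s * |x.1| := by rw [abs_mul, abs_of_pos hs.1]
          nlinarith [hs.1.le, hs.2, abs_nonneg x.1]
        set F' : (ℝ × ℝ) → ℝ → (ℝ × ℝ) →L[ℝ] E := fun x s =>
          L1 ((s * w s) • g' (x.2 + s * x.1)) + L2 ((w s) • g' (x.2 + s * x.1)) with hF'
        have hderiv : ∀ s : ℝ, s ∈ Set.uIoc (0:ℝ) 1 → ∀ x ∈ Metric.ball p 1,
            HasFDerivAt (fun q : ℝ × ℝ => w s • g (q.2 + s * q.1)) (F' x s) x := by
          intro s _ x _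
          have hm : HasFDerivAt (fun q : ℝ × ℝ => q.2 + s * q.1)
              (snd ℝ ℝ ℝ + s • fst ℝ ℝ ℝ) x :=
            hasFDerivAt_snd.add (hasFDerivAt_fst.const_smul s)
          have hgd : HasFDerivAt g ((1 : ℝ →L[ℝ] ℝ).smulRight (g' (x.2 + s * x.1)))
              (x.2 + s * x.1) := (hgdiff (x.2 + s * x.1)).hasDerivAt.hasFDerivAt
          have h2 := (hgd.comp x hm).const_smul (w s)
          have hL1app : ∀ (v : E) (q : ℝ × ℝ), L1 v q = q.1 • v := fun v q => rfl
          have hL2app : ∀ (v : E) (q : ℝ × ℝ), L2 v q = q.2 • v := fun v q => rfl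
          have heq2 : (w s • (ContinuousLinearMap.smulRight (1 : ℝ →L[ℝ] ℝ)
              (g' (x.2 + s * x.1))).comp (snd ℝ ℝ ℝ + s • fst ℝ ℝ ℝ)) = F' x s := by
            refine ContinuousLinearMap.ext fun v => ?_
            simp only [hF', ContinuousLinearMap.add_apply, hL1app, hL2app,
              ContinuousLinearMap.smul_apply, ContinuousLinearMap.coe_comp',
              Function.comp_apply, ContinuousLinearMap.smulRight_apply,
              ContinuousLinearMap.coe_fst', ContinuousLinearMap.coe_snd',
              ContinuousLinearMap.one_apply, ContinuousLinearMap.coe_smul', Pi.smul_apply,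
              smul_smul, smul_eq_mul]
            module
          exact heq2 ▸ h2
        have hbound : ∀ s : ℝ, s ∈ Set.uIoc (0:ℝ) 1 → ∀ x ∈ Metric.ball p 1,
            ‖F' x s‖ ≤ W * M + W * M := by
          intro s hs x hx
          have hu : ‖g' (x.2 + s * x.1)‖ ≤ M := hM0 _ (hmem x hx s hs)
          have hws : |w s| ≤ W := hW1 s hs
          have hs' := hs
          rw [Set.uIoc_of_le zero_le_one] at hs'
          have hWpos : (0:ℝ) ≤ W := le_trans (abs_nonneg _) hws
          have h1 : ‖L1 ((s * w s) • g' (x.2 + s * x.1))‖ ≤ W * M := by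
            rw [hL1, show ∀ (c : (ℝ × ℝ) →L[ℝ] ℝ) (f : E), smulRightL ℝ (ℝ × ℝ) E c f = smulRight c f from
              fun _ _ => rfl, norm_smulRight_apply, norm_smul, Real.norm_eq_abs]
            calc ‖fst ℝ ℝ ℝ‖ * (|s * w s| * ‖g' (x.2 + s * x.1)‖)
                ≤ 1 * (|s * w s| * ‖g' (x.2 + s * x.1)‖) := by
                  apply mul_le_mul_of_nonneg_right (norm_fst_le ℝ ℝ ℝ) (by positivity)
              _ = |s * w s| * ‖g' (x.2 + s * x.1)‖ := one_mul _
              _ ≤ W * M := by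
                  apply mul_le_mul _ hu (norm_nonneg _) hWpos
                  rw [abs_mul, abs_of_pos hs'.1]
                  calc s * |w s| ≤ 1 * |w s| :=
                        mul_le_mul_of_nonneg_right hs'.2 (abs_nonneg _)
                    _ ≤ W := by rw [one_mul]; exact hws
          have h2 : ‖L2 ((w s) • g' (x.2 + s * x.1))‖ ≤ W * M := by
            rw [hL2, show ∀ (c : (ℝ × ℝ) →L[ℝ] ℝ) (f : E), smulRightL ℝ (ℝ × ℝ) E c f = smulRight c f from
              fun _ _ => rfl, norm_smulRight_apply, norm_smul, Real.norm_eq_abs]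
            calc ‖snd ℝ ℝ ℝ‖ * (|w s| * ‖g' (x.2 + s * x.1)‖)
                ≤ 1 * (|w s| * ‖g' (x.2 + s * x.1)‖) := by
                  apply mul_le_mul_of_nonneg_right (norm_snd_le ℝ ℝ ℝ) (by positivity)
              _ = |w s| * ‖g' (x.2 + s * x.1)‖ := one_mul _
              _ ≤ W * M := mul_le_mul hws hu (norm_nonneg _) hWpos
          exact le_trans (norm_add_le _ _) (add_le_add h1 h2)
        have hmeas1 : ∀ x : ℝ × ℝ,
            AEStronglyMeasurable (fun s => w s • g (x.2 + s * x.1))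
              (volume.restrict (Set.uIoc (0:ℝ) 1)) := by
          intro x
          exact ((hw.smul (hgc.comp (by fun_prop))).aestronglyMeasurable).restrict
        have hint : IntervalIntegrable (fun s => w s • g (p.2 + s * p.1)) volume 0 1 :=
          (hw.smul (hgc.comp (by fun_prop))).intervalIntegrable _ _
        have hc1 : Continuous fun s : ℝ => (s * w s) • g' (p.2 + s * p.1) := by fun_prop
        have hc2 : Continuous fun s : ℝ => (w s) • g' (p.2 + s * p.1) := by fun_prop
        have hc1' : Continuous fun s : ℝ => L1 ((s * w s) • g' (p.2 + s * p.1)) :=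
          L1.continuous.comp hc1
        have hc2' : Continuous fun s : ℝ => L2 ((w s) • g' (p.2 + s * p.1)) :=
          L2.continuous.comp hc2
        have hmeas2 : AEStronglyMeasurable (F' p) (volume.restrict (Set.uIoc (0:ℝ) 1)) :=
          ((hc1'.add hc2').aestronglyMeasurable).restrict
        have main := intervalIntegral.hasFDerivAt_integral_of_dominated_of_fderiv_le
          (𝕜 := ℝ) (μ := volume) (F := fun (x : ℝ × ℝ) s => w s • g (x.2 + s * x.1)) (F' := F')
          (bound := fun _ => W * M + W * M) (a := 0) (b := 1) (x₀ := p) (Metric.ball_mem_nhds p zero_lt_one)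
          (Filter.Eventually.of_forall hmeas1) hint hmeas2
          (Filter.Eventually.of_forall hbound) intervalIntegrable_const
          (Filter.Eventually.of_forall hderiv)
        have e1 : (∫ s in (0:ℝ)..1, L1 ((s * w s) • g' (p.2 + s * p.1))) = L1 (Φ1 p) :=
          L1.intervalIntegral_comp_comm (hc1.intervalIntegrable _ _)
        have e2 : (∫ s in (0:ℝ)..1, L2 ((w s) • g' (p.2 + s * p.1))) = L2 (Φ2 p) :=
          L2.intervalIntegral_comp_comm (hc2.intervalIntegrable _ _)
        have heq : (∫ s in (0:ℝ)..1, F' p s) = D p := by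
          calc (∫ s in (0:ℝ)..1, F' p s)
              = (∫ s in (0:ℝ)..1,
                  (L1 ((s * w s) • g' (p.2 + s * p.1)) + L2 ((w s) • g' (p.2 + s * p.1)))) := rfl
            _ = (∫ s in (0:ℝ)..1, L1 ((s * w s) • g' (p.2 + s * p.1)))
                + (∫ s in (0:ℝ)..1, L2 ((w s) • g' (p.2 + s * p.1))) :=
                intervalIntegral.integral_add (hc1'.intervalIntegrable _ _)
                  (hc2'.intervalIntegrable _ _)
            _ = D p := by rw [e1, e2]
        rw [heq] at main
        exact main
      have hdiff : Differentiable ℝ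
          (fun p : ℝ × ℝ => ∫ s in (0:ℝ)..1, w s • g (p.2 + s * p.1)) :=
        fun p => (key p).differentiableAt
      have hfd : fderiv ℝ (fun p : ℝ × ℝ => ∫ s in (0:ℝ)..1, w s • g (p.2 + s * p.1)) = D :=
        funext fun p => (key p).fderiv
      have hDc : ContDiff ℝ (n : ℕ) D := by
        apply ContDiff.add
        · exact L1.contDiff.comp (ih g' hg' (fun s => s * w s) (by fun_prop))
        · exact L2.contDiff.comp (ih g' hg' w hw)
      have hcast : ((n + 1 : ℕ) : WithTop ℕ∞) = (n : ℕ) + 1 := by push_cast; ring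
      rw [hcast, contDiff_succ_iff_fderiv]
      refine ⟨hdiff, by simp, ?_⟩
      rw [hfd]
      exact hDc

end Param

section Main

open Real Set

-- FTC-based slope representation
lemma key_gen {E : Type*} [NormedAddCommGroup E] [NormedSpace ℝ E] [CompleteSpace E]
    (f : ℝ → E) (hf : ContDiff ℝ (⊤ : ℕ∞) f) (x τ : ℝ) :
    f (τ + x) - f τ = x • ∫ s in (0:ℝ)..1, deriv f (τ + s * x) := by
  have hd : Differentiable ℝ f := hf.differentiable (by simp)
  have hc : Continuous (deriv f) := (contDiff_infty_iff_deriv.mp hf).2.continuous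
  by_cases hx : x = 0
  · simp [hx]
  · have h1 : (∫ s in (0:ℝ)..1, deriv f (τ + s * x)) = ∫ s in (0:ℝ)..1, deriv f (x * s + τ) :=
      intervalIntegral.integral_congr (fun s _ => by ring_nf)
    rw [h1, intervalIntegral.integral_comp_mul_add (deriv f) hx τ]
    rw [intervalIntegral.integral_deriv_eq_sub (fun u _ => hd.differentiableAt)
      (hc.intervalIntegrable _ _)]
    rw [smul_smul, mul_inv_cancel₀ hx, one_smul, mul_zero, zero_add, mul_one, add_comm]

/-- Smooth factorization of the squared chord length of a smooth closed regular curve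
against `4 sin²((t−τ)/2)`: if `γ : ℝ → ℝ²` is smooth, `2π`-periodic, regular
(`γ'(t) ≠ 0`), and injective on `[0, 2π)`, then there exist a smooth function
`e : ℝ × ℝ → ℝ`, `2π`-periodic in each variable, and `c > 0` such that
`‖γ(t) − γ(τ)‖² = 4 sin²((t−τ)/2) e(t,τ)` and `e(t,τ) ≥ c` for all `t, τ`. -/
theorem stmt_10 (γ : ℝ → EuclideanSpace ℝ (Fin 2))
    (hsmooth : ContDiff ℝ (⊤ : ℕ∞) γ) (hper : Function.Periodic γ (2 * Real.pi))
    (hreg : ∀ t : ℝ, deriv γ t ≠ 0)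
    (hinj : Set.InjOn γ (Set.Ico 0 (2 * Real.pi))) :
    ∃ (e : ℝ × ℝ → ℝ) (c : ℝ), 0 < c ∧ ContDiff ℝ (⊤ : ℕ∞) e ∧
      (∀ t τ : ℝ, e (t + 2 * Real.pi, τ) = e (t, τ)) ∧
      (∀ t τ : ℝ, e (t, τ + 2 * Real.pi) = e (t, τ)) ∧
      (∀ t τ : ℝ, ‖γ t - γ τ‖ ^ 2 = 4 * Real.sin ((t - τ) / 2) ^ 2 * e (t, τ)) ∧
      (∀ t τ : ℝ, c ≤ e (t, τ)) := by
  classical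
  have hpi : (0:ℝ) < 2 * π := by positivity
  have hγ' : ContDiff ℝ (⊤ : ℕ∞) (deriv γ) := (contDiff_infty_iff_deriv.mp hsmooth).2
  -- integer periodicity
  have hperZ : ∀ (k : ℤ) (t : ℝ), γ (t + k * (2 * π)) = γ t := by
    intro k t
    have := (hper.int_mul k) t
    simpa using this
  -- periodicity of the derivative
  have hper' : ∀ τ : ℝ, deriv γ (τ + 2 * π) = deriv γ τ := by
    intro τ
    have hfun : (fun x => γ (x + 2 * π)) = γ := funext fun x => hper x
    calc deriv γ (τ + 2 * π) = deriv (fun x => γ (x + 2 * π)) τ :=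
          (deriv_comp_add_const (f := γ) (2 * π) τ).symm
      _ = deriv γ τ := by rw [hfun]
  -- sin zero characterization
  have hsin0 : ∀ a : ℝ, Real.sin (a / 2) = 0 ↔ ∃ k : ℤ, a = k * (2 * π) := by
    intro a
    constructor
    · intro h
      obtain ⟨n, hn⟩ := Real.sin_eq_zero_iff.mp h
      exact ⟨n, by linarith⟩
    · rintro ⟨k, rfl⟩
      have : (k : ℝ) * (2 * π) / 2 = k * π := by ring
      rw [this]
      exact Real.sin_int_mul_pi k
  -- the chord map G
  set G : ℝ × ℝ → EuclideanSpace ℝ (Fin 2) :=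
    fun q => ∫ s in (0:ℝ)..1, deriv γ (q.2 + s * q.1) with hGdef
  have hG : ContDiff ℝ (⊤ : ℕ∞) G := by
    rw [contDiff_infty]
    intro n
    have h := paramInt_contDiff_nat n (deriv γ) hγ' (fun _ => (1:ℝ)) continuous_const
    have : (fun p : ℝ × ℝ => ∫ s in (0:ℝ)..1, (1:ℝ) • deriv γ (p.2 + s * p.1)) = G := by
      funext p; simp [hGdef]
    rwa [this] at h
  have hGkey : ∀ x τ : ℝ, γ (τ + x) - γ τ = x • G (x, τ) := fun x τ => key_gen γ hsmooth x τ
  have hG0 : ∀ τ : ℝ, G (0, τ) = deriv γ τ := by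
    intro τ
    show (∫ s in (0:ℝ)..1, deriv γ (τ + s * 0)) = deriv γ τ
    rw [show (∫ s in (0:ℝ)..1, deriv γ (τ + s * 0)) = ∫ s in (0:ℝ)..1, deriv γ τ from
      intervalIntegral.integral_congr (fun s _ => by norm_num)]
    simp
  -- the sinc-type map S
  set S : ℝ → ℝ := fun x => ∫ s in (0:ℝ)..1, deriv Real.sin (0 + s * x) with hSdef
  have hS : ContDiff ℝ (⊤ : ℕ∞) S := by
    rw [contDiff_infty]
    intro n
    have h := paramInt_contDiff_nat n (deriv Real.sin)
      (by rw [Real.deriv_sin]; exact Real.contDiff_cos) (fun _ => (1:ℝ)) continuous_const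
    have heqS : S = ((fun p : ℝ × ℝ => ∫ s in (0:ℝ)..1, (1:ℝ) • deriv Real.sin (p.2 + s * p.1)) ∘
        (fun x : ℝ => (x, (0:ℝ)))) := by
      funext x; simp [hSdef]
    rw [heqS]
    exact h.comp (contDiff_id.prodMk contDiff_const)
  have hSkey : ∀ x : ℝ, Real.sin x = x * S x := by
    intro x
    have h := key_gen Real.sin Real.contDiff_sin x 0
    rw [zero_add, Real.sin_zero, sub_zero, smul_eq_mul] at h
    exact h
  have hS0 : S 0 = 1 := by
    show (∫ s in (0:ℝ)..1, deriv Real.sin (0 + s * 0)) = 1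
    rw [show (∫ s in (0:ℝ)..1, deriv Real.sin (0 + s * 0)) = ∫ s in (0:ℝ)..1, (1:ℝ) from
      intervalIntegral.integral_congr (fun s _ => by simp [Real.deriv_sin])]
    simp
  -- chord identities
  have hchord : ∀ (k : ℤ) (t τ : ℝ),
      ‖γ t - γ τ‖ ^ 2 = (t - τ - k * (2 * π)) ^ 2 * ‖G (t - τ - k * (2 * π), τ)‖ ^ 2 := by
    intro k t τ
    set y := t - τ - k * (2 * π) with hy
    have h1 : γ t = γ (τ + y) := by
      have : t = (τ + y) + k * (2 * π) := by rw [hy]; ring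
      rw [this, hperZ k (τ + y)]
    rw [h1, show γ (τ + y) - γ τ = y • G (y, τ) from hGkey y τ]
    rw [norm_smul, Real.norm_eq_abs, mul_pow, sq_abs]
  have hdenom : ∀ (k : ℤ) (t τ : ℝ),
      4 * Real.sin ((t - τ) / 2) ^ 2
        = (t - τ - k * (2 * π)) ^ 2 * (S ((t - τ - k * (2 * π)) / 2)) ^ 2 := by
    intro k t τ
    set y := t - τ - k * (2 * π) with hy
    have h1 : Real.sin ((t - τ) / 2) = (-1 : ℝ) ^ k * Real.sin (y / 2) := by
      have : (t - τ) / 2 = y / 2 + k * π := by rw [hy]; ring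
      rw [this, Real.sin_add_int_mul_pi]
    have h2 : ((-1 : ℝ) ^ k) ^ 2 = 1 := by
      rcases Int.even_or_odd k with hk | hk
      · rw [hk.neg_one_zpow]; norm_num
      · rw [hk.neg_one_zpow]; norm_num
    calc 4 * Real.sin ((t - τ) / 2) ^ 2
        = 4 * (((-1 : ℝ) ^ k) ^ 2 * Real.sin (y / 2) ^ 2) := by rw [h1]; ring
      _ = 4 * Real.sin (y / 2) ^ 2 := by rw [h2, one_mul]
      _ = y ^ 2 * (S (y / 2)) ^ 2 := by rw [hSkey (y / 2)]; ring
  -- injectivity off the diagonal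
  have hne : ∀ t τ : ℝ, Real.sin ((t - τ) / 2) ≠ 0 → γ t ≠ γ τ := by
    intro t τ hs heq
    have h1 : toIcoMod hpi 0 t ∈ Set.Ico (0:ℝ) (2 * π) := toIcoMod_mem_Ico' hpi t
    have h2 : toIcoMod hpi 0 τ ∈ Set.Ico (0:ℝ) (2 * π) := toIcoMod_mem_Ico' hpi τ
    have e1 : γ (toIcoMod hpi 0 t) = γ t := by
      have hh : toIcoMod hpi 0 t = t + (-(toIcoDiv hpi 0 t) : ℤ) * (2 * π) := by
        rw [toIcoMod, zsmul_eq_mul]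
        push_cast
        ring
      rw [hh]
      exact hperZ _ t
    have e2 : γ (toIcoMod hpi 0 τ) = γ τ := by
      have hh : toIcoMod hpi 0 τ = τ + (-(toIcoDiv hpi 0 τ) : ℤ) * (2 * π) := by
        rw [toIcoMod, zsmul_eq_mul]
        push_cast
        ring
      rw [hh]
      exact hperZ _ τ
    have heq2 : toIcoMod hpi 0 t = toIcoMod hpi 0 τ :=
      hinj h1 h2 (by rw [e1, e2, heq])
    have hd : t - τ = ((toIcoDiv hpi 0 t - toIcoDiv hpi 0 τ : ℤ) : ℝ) * (2 * π) := by
      have h3 := heq2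
      rw [toIcoMod, toIcoMod, zsmul_eq_mul, zsmul_eq_mul] at h3
      push_cast at h3 ⊢
      linarith
    apply hs
    rw [hsin0]
    exact ⟨_, hd⟩
  -- definition of e
  set e : ℝ × ℝ → ℝ := fun p =>
    if Real.sin ((p.1 - p.2) / 2) = 0 then ‖deriv γ p.2‖ ^ 2
    else ‖γ p.1 - γ p.2‖ ^ 2 / (4 * Real.sin ((p.1 - p.2) / 2) ^ 2) with he_def
  -- the identity
  have hid : ∀ t τ : ℝ, ‖γ t - γ τ‖ ^ 2 = 4 * Real.sin ((t - τ) / 2) ^ 2 * e (t, τ) := by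
    intro t τ
    by_cases h : Real.sin ((t - τ) / 2) = 0
    · obtain ⟨k, hk⟩ := (hsin0 _).mp h
      have : γ t = γ τ := by
        have ht : t = τ + k * (2 * π) := by linarith
        rw [ht, hperZ]
      rw [this, h]
      simp
    · rw [he_def]
      simp only [if_neg h]
      rw [mul_div_cancel₀]
      have hs2 : 0 < Real.sin ((t - τ) / 2) ^ 2 := pow_two_pos_of_ne_zero h
      positivity
  -- positivity
  have hpos : ∀ p : ℝ × ℝ, 0 < e p := by
    intro p
    rw [he_def]
    by_cases h : Real.sin ((p.1 - p.2) / 2) = 0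
    · simp only [if_pos h]
      have hn : 0 < ‖deriv γ p.2‖ := norm_pos_iff.mpr (hreg p.2)
      positivity
    · simp only [if_neg h]
      apply div_pos
      · have h2 : γ p.1 - γ p.2 ≠ 0 := sub_ne_zero_of_ne (hne p.1 p.2 h)
        have hn : 0 < ‖γ p.1 - γ p.2‖ := norm_pos_iff.mpr h2
        positivity
      · have hs2 : 0 < Real.sin ((p.1 - p.2) / 2) ^ 2 := pow_two_pos_of_ne_zero h
        positivity
  -- periodicity in the first variable
  have hper1 : ∀ t τ : ℝ, e (t + 2 * π, τ) = e (t, τ) := by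
    intro t τ
    have hs : Real.sin ((t + 2 * π - τ) / 2) = -Real.sin ((t - τ) / 2) := by
      rw [show (t + 2 * π - τ) / 2 = (t - τ) / 2 + π by ring, Real.sin_add_pi]
    simp only [he_def, hs, neg_eq_zero, neg_sq, hper t]
  -- periodicity in the second variable
  have hper2 : ∀ t τ : ℝ, e (t, τ + 2 * π) = e (t, τ) := by
    intro t τ
    have hs : Real.sin ((t - (τ + 2 * π)) / 2) = -Real.sin ((t - τ) / 2) := by
      rw [show (t - (τ + 2 * π)) / 2 = (t - τ) / 2 - π by ring, Real.sin_sub_pi]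
    simp only [he_def, hs, neg_eq_zero, neg_sq, hper τ, hper' τ]
  -- smoothness
  have hsmooth_e : ContDiff ℝ (⊤ : ℕ∞) e := by
    rw [contDiff_iff_contDiffAt]
    intro p₀
    by_cases h0 : Real.sin ((p₀.1 - p₀.2) / 2) = 0
    · -- near a diagonal point: use the local formula
      obtain ⟨k, hk⟩ := (hsin0 _).mp h0
      set φ : ℝ × ℝ → ℝ := fun p =>
        ‖G (p.1 - p.2 - k * (2 * π), p.2)‖ ^ 2 / (S ((p.1 - p.2 - k * (2 * π)) / 2)) ^ 2
        with hφdef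
      have hnum : ContDiff ℝ (⊤ : ℕ∞) fun p : ℝ × ℝ =>
          ‖G (p.1 - p.2 - k * (2 * π), p.2)‖ ^ 2 := by
        apply ContDiff.norm_sq (𝕜 := ℝ)
        apply hG.comp
        apply ContDiff.prodMk
        · exact (contDiff_fst.sub contDiff_snd).sub contDiff_const
        · exact contDiff_snd
      have hden : ContDiff ℝ (⊤ : ℕ∞) fun p : ℝ × ℝ =>
          (S ((p.1 - p.2 - k * (2 * π)) / 2)) ^ 2 := by
        apply ContDiff.pow
        apply hS.comp
        exact ((contDiff_fst.sub contDiff_snd).sub contDiff_const).div_const 2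
      have hden0 : (S ((p₀.1 - p₀.2 - k * (2 * π)) / 2)) ^ 2 ≠ 0 := by
        rw [show p₀.1 - p₀.2 - k * (2 * π) = 0 by linarith]
        rw [show (0:ℝ)/2 = 0 by norm_num, hS0]
        norm_num
      have hφ : ContDiffAt ℝ (⊤ : ℕ∞) φ p₀ :=
        (hnum.contDiffAt).div (hden.contDiffAt) hden0
      apply hφ.congr_of_eventuallyEq
      -- e = φ on the open set V
      have hV : IsOpen {p : ℝ × ℝ | |p.1 - p.2 - k * (2 * π)| < 2 * π} := by
        have : Continuous fun p : ℝ × ℝ => |p.1 - p.2 - k * (2 * π)| := by fun_prop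
        exact isOpen_lt this continuous_const
      have hp₀V : p₀ ∈ {p : ℝ × ℝ | |p.1 - p.2 - k * (2 * π)| < 2 * π} := by
        simp only [Set.mem_setOf_eq]
        rw [show p₀.1 - p₀.2 - k * (2 * π) = 0 by linarith]
        simpa using hpi
      filter_upwards [hV.mem_nhds hp₀V] with p hp
      set y := p.1 - p.2 - k * (2 * π) with hy
      by_cases hs : Real.sin ((p.1 - p.2) / 2) = 0
      · -- then y = 0
        obtain ⟨m, hm⟩ := (hsin0 _).mp hs
        have hy0 : y = ((m - k : ℤ) : ℝ) * (2 * π) := by push_cast; rw [hy]; linarith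
        have hmk : m = k := by
          by_contra hne'
          have h1 : (1:ℝ) ≤ |((m - k : ℤ) : ℝ)| := by
            rw [← Int.cast_abs]
            exact_mod_cast Int.one_le_abs (sub_ne_zero_of_ne hne')
          have h2 : |y| = |((m - k : ℤ) : ℝ)| * (2 * π) := by
            rw [hy0, abs_mul, abs_of_pos hpi]
          nlinarith [hp]
        have hy0' : y = 0 := by rw [hy0, hmk]; simp
        rw [he_def, hφdef]
        simp only [if_pos hs, ← hy, hy0']
        rw [show (0:ℝ)/2 = 0 by norm_num, hS0, hG0]
        norm_num
      · -- y ≠ 0, both sides equal the quotient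
        have hy0 : y ≠ 0 := by
          intro hy0
          apply hs
          rw [hsin0]
          exact ⟨k, by rw [hy] at hy0; linarith⟩
        rw [he_def, hφdef]
        simp only [if_neg hs, ← hy]
        rw [hchord k p.1 p.2, hdenom k p.1 p.2, ← hy]
        rw [mul_div_mul_left _ _ (pow_ne_zero 2 hy0)]
    · -- away from the diagonal: the quotient formula
      have hU : IsOpen {p : ℝ × ℝ | Real.sin ((p.1 - p.2) / 2) ≠ 0} := by
        have : Continuous fun p : ℝ × ℝ => Real.sin ((p.1 - p.2) / 2) := by fun_prop
        exact isOpen_ne_fun this continuous_const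
      have hnum : ContDiff ℝ (⊤ : ℕ∞) fun p : ℝ × ℝ => ‖γ p.1 - γ p.2‖ ^ 2 :=
        ContDiff.norm_sq (𝕜 := ℝ)
          ((hsmooth.comp contDiff_fst).sub (hsmooth.comp contDiff_snd))
      have hden : ContDiff ℝ (⊤ : ℕ∞) fun p : ℝ × ℝ =>
          4 * Real.sin ((p.1 - p.2) / 2) ^ 2 := by
        apply ContDiff.mul contDiff_const
        apply ContDiff.pow
        exact Real.contDiff_sin.comp ((contDiff_fst.sub contDiff_snd).div_const 2)
      have hφ : ContDiffAt ℝ (⊤ : ℕ∞) (fun p : ℝ × ℝ =>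
          ‖γ p.1 - γ p.2‖ ^ 2 / (4 * Real.sin ((p.1 - p.2) / 2) ^ 2)) p₀ := by
        apply (hnum.contDiffAt).div (hden.contDiffAt)
        positivity
      apply hφ.congr_of_eventuallyEq
      filter_upwards [hU.mem_nhds h0] with p hp
      rw [he_def]
      simp only [if_neg hp]
  -- the uniform lower bound
  have hKcpt : IsCompact (Set.Icc (0:ℝ) (2 * π) ×ˢ Set.Icc (0:ℝ) (2 * π)) :=
    isCompact_Icc.prod isCompact_Icc
  have hKne : (Set.Icc (0:ℝ) (2 * π) ×ˢ Set.Icc (0:ℝ) (2 * π)).Nonempty :=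
    ⟨(0, 0), by constructor <;> exact ⟨le_refl _, by positivity⟩⟩
  obtain ⟨pm, hpmK, hpm⟩ := hKcpt.exists_isMinOn hKne (hsmooth_e.continuous.continuousOn)
  refine ⟨e, e pm, hpos pm, hsmooth_e, hper1, hper2, hid, ?_⟩
  intro t τ
  -- reduce to the fundamental domain
  have hredt : ∀ (τ' : ℝ) (s : ℝ), e (s, τ') = e (toIcoMod hpi 0 s, τ') := by
    intro τ' s
    have hP : Function.Periodic (fun u => e (u, τ')) (2 * π) := fun u => hper1 u τ'
    have := (hP.int_mul (toIcoDiv hpi 0 s)) (toIcoMod hpi 0 s)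
    have harg : toIcoMod hpi 0 s + (toIcoDiv hpi 0 s : ℤ) * (2 * π) = s := by
      rw [toIcoMod]
      rw [zsmul_eq_mul]
      ring
    rw [harg] at this
    exact this
  have hredτ : ∀ (t' : ℝ) (s : ℝ), e (t', s) = e (t', toIcoMod hpi 0 s) := by
    intro t' s
    have hP : Function.Periodic (fun u => e (t', u)) (2 * π) := fun u => hper2 t' u
    have := (hP.int_mul (toIcoDiv hpi 0 s)) (toIcoMod hpi 0 s)
    have harg : toIcoMod hpi 0 s + (toIcoDiv hpi 0 s : ℤ) * (2 * π) = s := by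
      rw [toIcoMod]
      rw [zsmul_eq_mul]
      ring
    rw [harg] at this
    exact this
  have hmem : (toIcoMod hpi 0 t, toIcoMod hpi 0 τ) ∈
      Set.Icc (0:ℝ) (2 * π) ×ˢ Set.Icc (0:ℝ) (2 * π) := by
    constructor
    · exact Set.Ico_subset_Icc_self (toIcoMod_mem_Ico' hpi t)
    · exact Set.Ico_subset_Icc_self (toIcoMod_mem_Ico' hpi τ)
  calc e pm ≤ e (toIcoMod hpi 0 t, toIcoMod hpi 0 τ) := hpm hmem
    _ = e (t, toIcoMod hpi 0 τ) := (hredt _ t).symm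
    _ = e (t, τ) := (hredτ _ τ).symm

end Main
end

section
/- Let m, t ≥ 0 and a > 0. There exists C > 0, depending only on m, t and a, such that the following holds for all real numbers k ≥ k₀ > 0. Let ι be a countable index set, (λ_i)_{i∈ι} nonnegative reals, (c_i)_{i∈ι} complex numbers, and for each integer j with 0 ≤ j < log₂ k − log₂ k₀ + 1 let I_j := { i ∈ ι : 2^{−j−1} a k < λ_i ≤ 2^{−j} a k } (these sets are pairwise disjoint). Then ∑_{0 ≤ j < log₂(k/k₀)+1} ∑_{i ∈ I_j} (1 + λ_i²)^m 2^{2jt} |c_i|² ≤ C · max( k^{2t} k₀^{−2t} (1 + k₀²)^m , (1 + k²)^m ) · ∑_{0 ≤ j < log₂(k/k₀)+1} ∑_{i ∈ I_j} |c_i|², where the sums of nonnegative terms are taken in [0, +∞]. -/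
open Real

set_option maxHeartbeats 1000000 in
private lemma weight_key (m t a : ℝ) (hm : 0 ≤ m) (ht : 0 ≤ t) (ha : 0 < a)
    (k k₀ : ℝ) (hk₀ : 0 < k₀) (hk : k₀ ≤ k) (j : ℕ)
    (hj : (j : ℝ) < Real.logb 2 k - Real.logb 2 k₀ + 1)
    (L : ℝ)
    (h1 : (2 : ℝ) ^ (-(j : ℝ) - 1) * a * k < L)
    (h2 : L ≤ (2 : ℝ) ^ (-(j : ℝ)) * a * k) :
    (1 + L ^ 2) ^ m * (2 : ℝ) ^ (2 * (j : ℝ) * t)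
      ≤ ((2:ℝ) ^ (2 * t) * 2 ^ m * (max 1 a) ^ (2 * (m + t))) *
        max (k ^ (2 * t) * k₀ ^ (-(2 * t)) * (1 + k₀ ^ 2) ^ m) ((1 + k ^ 2) ^ m) := by
  have hk0 : 0 < k := hk₀.trans_le hk
  have hL0 : 0 < L := lt_trans (by positivity) h1
  have hP : (0:ℝ) < (2:ℝ) ^ (j:ℝ) := rpow_pos_of_pos two_pos _
  have ha' : (1:ℝ) ≤ max 1 a := le_max_left 1 a
  have ha0' : (0:ℝ) < max 1 a := lt_of_lt_of_le one_pos ha'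
  have hC1 : (1:ℝ) ≤ (2:ℝ) ^ (2*t) := one_le_rpow one_le_two (by positivity)
  have hC2 : (1:ℝ) ≤ (2:ℝ) ^ m := one_le_rpow one_le_two hm
  have hC3 : (1:ℝ) ≤ (max 1 a) ^ (2*(m+t)) := one_le_rpow ha' (by positivity)
  have hat : a ^ (2*t) ≤ (max 1 a) ^ (2*(m+t)) :=
    (Real.rpow_le_rpow ha.le (le_max_right 1 a) (by positivity)).trans
      (Real.rpow_le_rpow_of_exponent_le ha' (by linarith))
  have ham : (max 1 a) ^ (2*m) ≤ (max 1 a) ^ (2*(m+t)) :=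
    Real.rpow_le_rpow_of_exponent_le ha' (by linarith)
  set C := (2:ℝ) ^ (2 * t) * 2 ^ m * (max 1 a) ^ (2 * (m + t)) with hCdef
  have hCpos : 0 < C := by positivity
  have hprod : (1:ℝ) ≤ (2:ℝ)^m * (max 1 a)^(2*(m+t)) := by
    calc (1:ℝ) = 1*1 := by ring
      _ ≤ (2:ℝ)^m * (max 1 a)^(2*(m+t)) := mul_le_mul hC2 hC3 zero_le_one (by positivity)
  have hcA : (2:ℝ)^(2*t) ≤ C := by
    rw [hCdef, mul_assoc]
    exact le_mul_of_one_le_right (by positivity) hprod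
  have hcB1 : (2:ℝ)^m * a^(2*t) ≤ C := by
    calc (2:ℝ)^m * a^(2*t) ≤ (2:ℝ)^m * (max 1 a)^(2*(m+t)) :=
          mul_le_mul_of_nonneg_left hat (by positivity)
      _ ≤ (2:ℝ)^(2*t) * ((2:ℝ)^m * (max 1 a)^(2*(m+t))) :=
          le_mul_of_one_le_left (by positivity) hC1
      _ = C := by rw [hCdef]; ring
  have hcB2 : (2:ℝ)^m * (max 1 a)^(2*m) ≤ C := by
    calc (2:ℝ)^m * (max 1 a)^(2*m) ≤ (2:ℝ)^m * (max 1 a)^(2*(m+t)) :=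
          mul_le_mul_of_nonneg_left ham (by positivity)
      _ ≤ (2:ℝ)^(2*t) * ((2:ℝ)^m * (max 1 a)^(2*(m+t))) :=
          le_mul_of_one_le_left (by positivity) hC1
      _ = C := by rw [hCdef]; ring
  set M := max (k ^ (2 * t) * k₀ ^ (-(2 * t)) * (1 + k₀ ^ 2) ^ m) ((1 + k ^ 2) ^ m) with hMdef
  have hM1 : k ^ (2 * t) * k₀ ^ (-(2 * t)) * (1 + k₀ ^ 2) ^ m ≤ M := le_max_left _ _
  have hM2 : (1 + k ^ 2) ^ m ≤ M := le_max_right _ _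
  have helper : ∀ {x c₁ M₁ : ℝ}, 0 ≤ M₁ → c₁ ≤ C → M₁ ≤ M → x ≤ c₁ * M₁ → x ≤ C * M := by
    intro x c₁ M₁ hM₁ hc hMM hx
    exact hx.trans (mul_le_mul hc hMM hM₁ hCpos.le)
  have hw : (2 : ℝ) ^ (2 * (j : ℝ) * t) = ((2:ℝ) ^ (j:ℝ)) ^ (2*t) := by
    rw [← Real.rpow_mul (by norm_num)]; ring_nf
  have hsq : ∀ x : ℝ, 0 < x → x ^ (2*m) ≤ (1 + x^2)^m := by
    intro x hx
    rw [Real.rpow_mul hx.le]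
    apply Real.rpow_le_rpow (by positivity) ?_ hm
    rw [show ((2:ℝ)) = ((2:ℕ):ℝ) by norm_num, Real.rpow_natCast]
    nlinarith
  rcases le_or_gt L k₀ with hcase | hcase
  · -- L ≤ k₀ : use the bound on j
    have hj' : (j:ℝ) < Real.logb 2 (k/k₀) + 1 := by
      rwa [Real.logb_div (ne_of_gt hk0) (ne_of_gt hk₀)]
    have hPk : (2:ℝ) ^ (j:ℝ) < 2 * (k / k₀) := by
      have := Real.rpow_lt_rpow_of_exponent_lt one_lt_two hj'
      rwa [Real.rpow_add two_pos, Real.rpow_logb two_pos (by norm_num) (by positivity),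
        Real.rpow_one, mul_comm] at this
    have e1 : (1 + L ^ 2) ^ m ≤ (1 + k₀ ^ 2) ^ m :=
      Real.rpow_le_rpow (by positivity) (by nlinarith) hm
    have e2 : ((2:ℝ) ^ (j:ℝ)) ^ (2*t) ≤ (2 * (k / k₀)) ^ (2*t) :=
      Real.rpow_le_rpow hP.le hPk.le (by positivity)
    have e3 : ((2:ℝ) * (k / k₀)) ^ (2*t) = (2:ℝ)^(2*t) * (k ^ (2*t) * k₀ ^ (-(2*t))) := by
      rw [Real.mul_rpow (by norm_num) (by positivity), Real.div_rpow hk0.le hk₀.le,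
        Real.rpow_neg hk₀.le, div_eq_mul_inv]
    refine helper (by positivity) hcA hM1 ?_
    rw [hw]
    calc (1 + L ^ 2) ^ m * ((2:ℝ) ^ (j:ℝ)) ^ (2*t)
        ≤ (1 + k₀ ^ 2) ^ m * ((2:ℝ) * (k / k₀)) ^ (2*t) :=
          mul_le_mul e1 e2 (by positivity) (by positivity)
      _ = (2:ℝ)^(2*t) * (k ^ (2 * t) * k₀ ^ (-(2 * t)) * (1 + k₀ ^ 2) ^ m) := by
          rw [e3]; ring
  · -- k₀ < L
    have hPL : (2:ℝ) ^ (j:ℝ) ≤ a * k / L := by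
      rw [le_div_iff₀ hL0]
      have h2' : L ≤ ((2:ℝ) ^ (j:ℝ))⁻¹ * a * k := by rwa [← Real.rpow_neg (by norm_num)]
      calc (2:ℝ) ^ (j:ℝ) * L ≤ (2:ℝ) ^ (j:ℝ) * (((2:ℝ) ^ (j:ℝ))⁻¹ * a * k) :=
            mul_le_mul_of_nonneg_left h2' hP.le
        _ = a * k := by field_simp
    have eP : ((2:ℝ) ^ (j:ℝ)) ^ (2*t) ≤ (a * k / L) ^ (2*t) :=
      Real.rpow_le_rpow hP.le hPL (by positivity)
    have hLak : L ≤ a * k := by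
      refine h2.trans ?_
      have : (2:ℝ) ^ (-(j:ℝ)) ≤ 1 :=
        Real.rpow_le_one_of_one_le_of_nonpos one_le_two
          (neg_nonpos.mpr (Nat.cast_nonneg j))
      calc (2:ℝ) ^ (-(j:ℝ)) * a * k = (2:ℝ) ^ (-(j:ℝ)) * (a * k) := by ring
        _ ≤ 1 * (a * k) := mul_le_mul_of_nonneg_right this (by positivity)
        _ = a * k := one_mul _
    rcases le_or_gt L 1 with hL1 | hL1
    · -- B1 : L ≤ 1
      have e1 : (1 + L ^ 2) ^ m ≤ 2 ^ m :=
        Real.rpow_le_rpow (by positivity) (by nlinarith) hm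
      have e2 : (a * k / L) ^ (2*t) ≤ (a * k / k₀) ^ (2*t) := by
        apply Real.rpow_le_rpow (by positivity) ?_ (by positivity)
        exact div_le_div_of_nonneg_left (by positivity) hk₀ hcase.le
      have e3 : (a * k / k₀) ^ (2*t) = a^(2*t) * (k ^ (2*t) * k₀ ^ (-(2*t))) := by
        rw [Real.div_rpow (by positivity) hk₀.le, Real.mul_rpow ha.le hk0.le,
          Real.rpow_neg hk₀.le, div_eq_mul_inv]; ring
      refine helper (by positivity) hcB1 hM1 ?_
      rw [hw]
      calc (1 + L ^ 2) ^ m * ((2:ℝ) ^ (j:ℝ)) ^ (2*t)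
          ≤ 2 ^ m * (a * k / k₀) ^ (2*t) :=
            mul_le_mul e1 (eP.trans e2) (by positivity) (by positivity)
        _ = 2^m * a^(2*t) * (k ^ (2 * t) * k₀ ^ (-(2 * t))) * 1 := by
            rw [e3]; ring
        _ ≤ 2^m * a^(2*t) * (k ^ (2 * t) * k₀ ^ (-(2 * t))) * (1 + k₀ ^ 2) ^ m := by
            have h01 : (1:ℝ) ≤ (1 + k₀ ^ 2) ^ m := one_le_rpow (by nlinarith) hm
            exact mul_le_mul_of_nonneg_left h01 (by positivity)
        _ = 2^m * a^(2*t) * (k ^ (2 * t) * k₀ ^ (-(2 * t)) * (1 + k₀ ^ 2) ^ m) := by ring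
    · -- 1 < L
      have e1 : (1 + L ^ 2) ^ m ≤ 2 ^ m * L ^ (2*m) := by
        have hb : (1:ℝ) + L^2 ≤ 2 * L^2 := by nlinarith
        calc (1 + L ^ 2) ^ m ≤ (2 * L ^ 2) ^ m :=
              Real.rpow_le_rpow (by positivity) hb hm
          _ = 2^m * L ^ (2*m) := by
              rw [Real.mul_rpow (by norm_num) (by positivity),
                ← Real.rpow_natCast L 2, ← Real.rpow_mul hL0.le]
              norm_num
      have e2 : (a * k / L) ^ (2*t) = (a*k)^(2*t) * L ^ (-(2*t)) := by
        rw [Real.div_rpow (by positivity) hL0.le, Real.rpow_neg hL0.le, div_eq_mul_inv]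
      have prod : (1 + L ^ 2) ^ m * ((2:ℝ)^(j:ℝ))^(2*t)
          ≤ 2^m * (a*k)^(2*t) * L ^ (2*m + -(2*t)) := by
        calc (1 + L ^ 2) ^ m * ((2:ℝ)^(j:ℝ))^(2*t)
            ≤ (2^m * L ^ (2*m)) * ((a*k)^(2*t) * L ^ (-(2*t))) := by
              rw [← e2]
              exact mul_le_mul e1 eP (by positivity) (by positivity)
          _ = 2^m * (a*k)^(2*t) * (L ^ (2*m) * L ^ (-(2*t))) := by ring
          _ = 2^m * (a*k)^(2*t) * L ^ (2*m + -(2*t)) := by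
              rw [← Real.rpow_add hL0]
      rcases le_or_gt t m with htm | htm
      · -- t ≤ m : compare with (1+k²)^m
        have e4 : L ^ (2*m + -(2*t)) ≤ (a*k) ^ (2*m + -(2*t)) :=
          Real.rpow_le_rpow hL0.le hLak (by linarith)
        have e5 : (a*k)^(2*t) * (a*k) ^ (2*m + -(2*t)) = (a*k)^(2*m) := by
          rw [← Real.rpow_add (by positivity)]; ring_nf
        have e6 : (a*k)^(2*m) ≤ (max 1 a)^(2*m) * (1+k^2)^m := by
          rw [Real.mul_rpow ha.le hk0.le]
          exact mul_le_mul (Real.rpow_le_rpow ha.le (le_max_right 1 a) (by positivity))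
            (hsq k hk0) (by positivity) (by positivity)
        refine helper (by positivity) hcB2 hM2 ?_
        rw [hw]
        calc (1 + L ^ 2) ^ m * ((2:ℝ)^(j:ℝ))^(2*t)
            ≤ 2^m * (a*k)^(2*t) * L ^ (2*m + -(2*t)) := prod
          _ ≤ 2^m * (a*k)^(2*t) * (a*k) ^ (2*m + -(2*t)) :=
              mul_le_mul_of_nonneg_left e4 (by positivity)
          _ = 2^m * (a*k)^(2*m) := by rw [mul_assoc, e5]
          _ ≤ 2^m * ((max 1 a)^(2*m) * (1+k^2)^m) :=
              mul_le_mul_of_nonneg_left e6 (by positivity)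
          _ = 2^m * (max 1 a)^(2*m) * (1+k^2)^m := by ring
      · -- m < t : compare with M1
        have e4 : L ^ (2*m + -(2*t)) ≤ k₀ ^ (2*m + -(2*t)) :=
          Real.rpow_le_rpow_of_nonpos hk₀ hcase.le (by linarith)
        have e5 : k₀ ^ (2*m + -(2*t)) = k₀ ^ (2*m) * k₀ ^ (-(2*t)) := by
          rw [← Real.rpow_add hk₀]
        have e7 : (a*k)^(2*t) = a^(2*t) * k^(2*t) := Real.mul_rpow ha.le hk0.le
        refine helper (by positivity) hcB1 hM1 ?_
        rw [hw]
        calc (1 + L ^ 2) ^ m * ((2:ℝ)^(j:ℝ))^(2*t)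
            ≤ 2^m * (a*k)^(2*t) * L ^ (2*m + -(2*t)) := prod
          _ ≤ 2^m * (a*k)^(2*t) * (k₀ ^ (2*m) * k₀ ^ (-(2*t))) := by
              rw [← e5]
              exact mul_le_mul_of_nonneg_left e4 (by positivity)
          _ ≤ 2^m * (a*k)^(2*t) * ((1+k₀^2)^m * k₀ ^ (-(2*t))) := by
              have := hsq k₀ hk₀
              refine mul_le_mul_of_nonneg_left ?_ (by positivity)
              exact mul_le_mul_of_nonneg_right this (by positivity)
          _ = 2^m * a^(2*t) * (k ^ (2 * t) * k₀ ^ (-(2 * t)) * (1 + k₀ ^ 2) ^ m) := by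
              rw [e7]; ring





/-- Dyadic Sobolev-weighting bound: for `m, t ≥ 0` and `a > 0` there is `C > 0` (depending
only on `m, t, a`) such that for all `k ≥ k₀ > 0`, any countable family of frequencies
`λ_i ≥ 0` with coefficients `c_i`, and dyadic bands
`I_j := {i : 2^{−j−1} a k < λ_i ≤ 2^{−j} a k}` for `0 ≤ j < log₂ k − log₂ k₀ + 1`,
`∑_j ∑_{i∈I_j} (1+λ_i²)^m 2^{2jt} |c_i|²
   ≤ C max(k^{2t} k₀^{−2t} (1+k₀²)^m, (1+k²)^m) ∑_j ∑_{i∈I_j} |c_i|²`,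
the sums of nonnegative terms being taken in `[0, ∞]`. -/
theorem stmt_13 (m t a : ℝ) (hm : 0 ≤ m) (ht : 0 ≤ t) (ha : 0 < a) :
    ∃ C : ℝ, 0 < C ∧
      ∀ k k₀ : ℝ, 0 < k₀ → k₀ ≤ k →
        ∀ (ι : Type*) [Countable ι] (lam : ι → ℝ), (∀ i, 0 ≤ lam i) → ∀ c : ι → ℂ,
          (∑' j : ℕ, if (j : ℝ) < Real.logb 2 k - Real.logb 2 k₀ + 1 then
              ∑' i : ι,
                (if (2 : ℝ) ^ (-(j : ℝ) - 1) * a * k < lam i ∧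
                    lam i ≤ (2 : ℝ) ^ (-(j : ℝ)) * a * k then
                  ENNReal.ofReal
                    ((1 + lam i ^ 2) ^ m * (2 : ℝ) ^ (2 * (j : ℝ) * t) * ‖c i‖ ^ 2)
                else 0)
            else 0)
          ≤ ENNReal.ofReal
              (C * max (k ^ (2 * t) * k₀ ^ (-(2 * t)) * (1 + k₀ ^ 2) ^ m)
                ((1 + k ^ 2) ^ m)) *
            ∑' j : ℕ, if (j : ℝ) < Real.logb 2 k - Real.logb 2 k₀ + 1 then
              ∑' i : ι,
                (if (2 : ℝ) ^ (-(j : ℝ) - 1) * a * k < lam i ∧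
                    lam i ≤ (2 : ℝ) ^ (-(j : ℝ)) * a * k then
                  ENNReal.ofReal (‖c i‖ ^ 2)
                else 0)
            else 0 := by
  refine ⟨(2:ℝ) ^ (2 * t) * 2 ^ m * (max 1 a) ^ (2 * (m + t)), by positivity, ?_⟩
  intro k k₀ hk₀ hk ι _ lam hlam c
  set C := (2:ℝ) ^ (2 * t) * 2 ^ m * (max 1 a) ^ (2 * (m + t)) with hCdef
  set M := max (k ^ (2 * t) * k₀ ^ (-(2 * t)) * (1 + k₀ ^ 2) ^ m) ((1 + k ^ 2) ^ m) with hMdef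
  have hM0 : 0 ≤ M := le_trans (Real.rpow_pos_of_pos (by positivity) m).le
    (le_max_right _ ((1 + k ^ 2) ^ m))
  have hC : (0:ℝ) < C := by rw [hCdef]; positivity
  have hCM : 0 ≤ C * M := mul_nonneg hC.le hM0
  rw [← ENNReal.tsum_mul_left]
  refine ENNReal.tsum_le_tsum fun j => ?_
  by_cases hj : (j : ℝ) < Real.logb 2 k - Real.logb 2 k₀ + 1
  · simp only [hj, if_true]
    rw [← ENNReal.tsum_mul_left]
    refine ENNReal.tsum_le_tsum fun i => ?_
    by_cases hi : (2 : ℝ) ^ (-(j : ℝ) - 1) * a * k < lam i ∧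
        lam i ≤ (2 : ℝ) ^ (-(j : ℝ)) * a * k
    · rw [if_pos hi, if_pos hi, ← ENNReal.ofReal_mul hCM]
      refine ENNReal.ofReal_le_ofReal ?_
      have := weight_key m t a hm ht ha k k₀ hk₀ hk j hj (lam i) hi.1 hi.2
      calc (1 + lam i ^ 2) ^ m * (2 : ℝ) ^ (2 * (j : ℝ) * t) * ‖c i‖ ^ 2
          ≤ (C * M) * ‖c i‖ ^ 2 := mul_le_mul_of_nonneg_right this (by positivity)
        _ = C * M * ‖c i‖ ^ 2 := by ring
    · rw [if_neg hi, if_neg hi]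
      simp
  · simp [hj]
end

section
/- Let X be a Banach space and let P, L : X → X be continuous linear maps with P idempotent (P ∘ P = P), and suppose both I + L and I + P ∘ L are bijective. Then for every g ∈ X, the element v := (I + L)⁻¹((I − P) g) satisfies (I + P ∘ L) v = (I − P) v. Consequently, if (I − P) v ≠ 0, then the operator norm of (I + P ∘ L)⁻¹ ∘ (I − P) is at least ‖v‖ / ‖(I − P) v‖. -/
/-- Pivot of the 'quasimodes imply pollution' mechanism: if `P` is an idempotent
continuous linear projection and `L` a continuous linear map on a Banach space `X`, with
`I + L` bijective (continuous inverse `E.symm`) and `I + P∘L` bijective (continuous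
inverse `U.symm`), then for every `g`, `v := (I+L)⁻¹((I−P) g)` satisfies
`(I + P∘L) v = (I − P) v`; consequently if `(I − P) v ≠ 0` then
`‖(I + P∘L)⁻¹ ∘ (I − P)‖ ≥ ‖v‖ / ‖(I − P) v‖`. -/
theorem stmt_14 {𝕜 X : Type*} [RCLike 𝕜] [NormedAddCommGroup X] [NormedSpace 𝕜 X]
    [CompleteSpace X] (P L : X →L[𝕜] X) (hP : P.comp P = P)
    (E : X ≃L[𝕜] X) (hE : ∀ x, E x = x + L x)
    (U : X ≃L[𝕜] X) (hU : ∀ x, U x = x + P (L x)) (g : X) :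
    (1 + P.comp L) (E.symm ((1 - P) g)) = (1 - P) (E.symm ((1 - P) g)) ∧
      ((1 - P) (E.symm ((1 - P) g)) ≠ 0 →
        ‖E.symm ((1 - P) g)‖ / ‖(1 - P) (E.symm ((1 - P) g))‖ ≤
          ‖(U.symm : X →L[𝕜] X).comp (1 - P)‖) := by
  set v := E.symm ((1 - P) g) with hv
  have hPP : ∀ x, P (P x) = P x := by
    intro x
    have := congrArg (fun T : X →L[𝕜] X => T x) hP
    simpa using this
  have hEv : v + L v = g - P g := by
    have : E v = (1 - P) g := E.apply_symm_apply _
    rw [hE] at this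
    simpa using this
  have hLv : L v = g - P g - v := by
    have := hEv
    abel_nf
    abel_nf at this
    linear_combination (norm := abel_nf) this
  have key : (1 + P.comp L) v = (1 - P) v := by
    simp only [ContinuousLinearMap.add_apply, ContinuousLinearMap.sub_apply,
      ContinuousLinearMap.one_apply, ContinuousLinearMap.comp_apply, hLv]
    rw [map_sub, map_sub, hPP]
    abel
  refine ⟨key, fun hne => ?_⟩
  have hUv : U v = (1 - P) v := by
    rw [hU]
    have := key
    simpa only [ContinuousLinearMap.add_apply, ContinuousLinearMap.one_apply,
      ContinuousLinearMap.comp_apply] using this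
  have hsymm : U.symm ((1 - P) v) = v := by
    rw [← hUv]; exact U.symm_apply_apply v
  have hidem : (1 - P) ((1 - P) v) = (1 - P) v := by
    simp only [ContinuousLinearMap.sub_apply, ContinuousLinearMap.one_apply]
    rw [map_sub, hPP]
    abel
  have happly : ((U.symm : X →L[𝕜] X).comp (1 - P)) ((1 - P) v) = v := by
    simp only [ContinuousLinearMap.comp_apply, hidem]
    exact hsymm
  have hle := ((U.symm : X →L[𝕜] X).comp (1 - P)).le_opNorm ((1 - P) v)
  rw [happly] at hle
  rw [div_le_iff₀ (norm_pos_iff.mpr hne)]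
  exact hle
end
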